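/- arXiv:0705.1243 — 11 statements merged into one kernel-verified Lean document; each statement's English description precedes it below -/
import Mathlib

section
/- Elliptic parameterization of the crown domain (Ξ = G·exp(iΩ)·x₀): the set of pairs (g·(e^{2iφ}·i), g·(−e^{2iφ}·i)) ∈ ℂ×ℂ, where g ranges over SL(2,ℝ) acting by Möbius transformations and φ ranges over the open interval (−π/4, π/4), is exactly the crown domain Ξ = {(z,w) ∈ ℂ×ℂ : Im z > 0 and Im w < 0}. -/
open Real

/-- The Möbius action of `SL(2,ℝ)` on (nonreal) complex numbers. -/
noncomputable def moebSL2R (g : Matrix.SpecialLinearGroup (Fin 2) ℝ) (z : ℂ) : ℂ :=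
  (((g : Matrix (Fin 2) (Fin 2) ℝ) 0 0 : ℂ) * z + ((g : Matrix (Fin 2) (Fin 2) ℝ) 0 1 : ℂ)) /
    (((g : Matrix (Fin 2) (Fin 2) ℝ) 1 0 : ℂ) * z + ((g : Matrix (Fin 2) (Fin 2) ℝ) 1 1 : ℂ))

/-!
Conjugating the second coordinate turns the problem into one about pairs of points of the upper
half plane `ℍ`: the base pair becomes `(p, conj (-p))` with `p = e^{2iφ} i`, the target pair
`(z, conj w)`. The hyperbolic distance `d` of the base pair satisfies `sinh (d / 2) = |tan 2φ|`,
which takes every value in `[0, ∞)` as `φ` ranges over `(-π/4, π/4)`. Since `SL(2,ℝ)` acts on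
`ℍ` by isometries and transitively on pairs of points at a given distance, every pair
`(z, conj w)` is reached.
-/

open UpperHalfPlane
open scoped MatrixGroups ComplexConjugate

theorem Complex.exists_sq_add_sq_eq_one_mul_add_mul_eq_zero {A B : ℂ} (h : (A * conj B).im = 0) :
    ∃ α β : ℝ, α ^ 2 + β ^ 2 = 1 ∧ α * A + β * B = 0 := by
  rcases eq_or_ne B 0 with rfl | hB
  · exact ⟨0, 1, by norm_num, by simp⟩
  obtain ⟨r, hA⟩ : ∃ r : ℝ, A = r * B := by
    refine ⟨(A * conj B).re / Complex.normSq B, ?_⟩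
    have hreal : A * conj B = ((A * conj B).re : ℂ) := Complex.ext rfl (by simpa using h)
    have hnormSq : (Complex.normSq B : ℂ) ≠ 0 := by exact_mod_cast (Complex.normSq_pos.2 hB).ne'
    rw [Complex.ofReal_div, div_mul_eq_mul_div, eq_div_iff hnormSq, ← hreal, ← Complex.mul_conj]
    ring
  refine ⟨1 / √(1 + r ^ 2), -r / √(1 + r ^ 2), ?_, ?_⟩
  · rw [div_pow, div_pow, ← add_div, neg_sq, Real.sq_sqrt (by positivity), one_pow,
      div_self (by positivity)]
  · rw [hA]; push_cast; ring

namespace UpperHalfPlane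

theorem specialLinearGroup_smul_eq_iff (g : SL(2, ℝ)) (τ σ : ℍ) :
    g • τ = σ ↔ (g 0 0 * τ + g 0 1 : ℂ) = σ * (g 1 0 * τ + g 1 1) := by
  rw [UpperHalfPlane.ext_iff, coe_specialLinearGroup_apply]
  simp only [Algebra.algebraMap_self, RingHom.id_apply]
  exact div_eq_iff (denom_ne_zero g τ)

theorem exists_smul_I_eq_I_smul_eq_of_dist_eq {τ σ : ℍ} (h : dist τ I = dist σ I) :
    ∃ k : SL(2, ℝ), k • I = I ∧ k • τ = σ := by
  -- `!![α, β; -β, α]` fixes `I` and maps `τ` to `σ` iff `α * (τ - σ) + β * (1 + τ * σ) = 0`;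
  -- equidistance from `I` is exactly the condition for a real solution `(α, β) ≠ 0`.
  have hsinh := (dist_eq_iff_eq_sq_sinh dist_nonneg).1 h
  rw [← (dist_eq_iff_eq_sq_sinh dist_nonneg).1 rfl] at hsinh
  simp only [Complex.dist_eq, Complex.sq_norm, Complex.normSq_apply, I_im, Complex.sub_re,
    Complex.sub_im, coe_I, Complex.I_re, Complex.I_im, sub_zero, coe_re, coe_im] at hsinh
  field_simp at hsinh
  obtain ⟨α, β, hαβ, hcomb⟩ := Complex.exists_sq_add_sq_eq_one_mul_add_mul_eq_zero
    (A := τ - σ) (B := 1 + τ * σ) (by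
      simp only [Complex.mul_im, Complex.mul_re, Complex.sub_re, Complex.sub_im, Complex.add_re,
        Complex.add_im, Complex.conj_re, Complex.conj_im, Complex.one_re, Complex.one_im, coe_im,
        coe_re]
      linear_combination -hsinh)
  let k : SL(2, ℝ) := ⟨!![α, β; -β, α], by rw [Matrix.det_fin_two_of]; linear_combination hαβ⟩
  refine ⟨k, ?_, ?_⟩ <;> rw [specialLinearGroup_smul_eq_iff] <;>
    simp only [k, Matrix.of_apply, Matrix.cons_val', Matrix.cons_val_zero, Matrix.cons_val_one,
      Matrix.cons_val_fin_one, Complex.ofReal_neg, coe_I]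
  · linear_combination (β : ℂ) * Complex.I_sq
  · linear_combination hcomb

theorem inv_toSL2R_smul (τ : ℍ) : τ.toSL2R⁻¹ • τ = I :=
  inv_smul_eq_iff.2 (toSL2R_smul_I τ).symm

theorem dist_inv_toSL2R_smul_I (τ σ : ℍ) : dist (τ.toSL2R⁻¹ • σ) I = dist σ τ := by
  rw [← inv_toSL2R_smul τ, dist_smul]

theorem exists_smul_eq_smul_eq_of_dist_eq {τ₁ τ₂ σ₁ σ₂ : ℍ} (h : dist τ₁ τ₂ = dist σ₁ σ₂) :
    ∃ g : SL(2, ℝ), g • τ₁ = σ₁ ∧ g • τ₂ = σ₂ := by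
  obtain ⟨k, hkI, hk⟩ := exists_smul_I_eq_I_smul_eq_of_dist_eq
    (τ := τ₁.toSL2R⁻¹ • τ₂) (σ := σ₁.toSL2R⁻¹ • σ₂)
    (by rw [dist_inv_toSL2R_smul_I, dist_inv_toSL2R_smul_I, dist_comm, h, dist_comm])
  refine ⟨σ₁.toSL2R * k * τ₁.toSL2R⁻¹, ?_, ?_⟩
  · rw [mul_smul, mul_smul, inv_toSL2R_smul, hkI, toSL2R_smul_I]
  · rw [mul_smul, mul_smul, hk, smul_inv_smul]

end UpperHalfPlane

theorem moebSL2R_coe (g : SL(2, ℝ)) (τ : ℍ) : moebSL2R g τ = ↑(g • τ) := by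
  rw [coe_specialLinearGroup_apply]
  rfl

theorem moebSL2R_conj (g : SL(2, ℝ)) (z : ℂ) : moebSL2R g (conj z) = conj (moebSL2R g z) := by
  simp [moebSL2R, map_div₀]

theorem im_moebSL2R_pos (g : SL(2, ℝ)) {z : ℂ} (hz : 0 < z.im) : 0 < (moebSL2R g z).im := by
  simpa [moebSL2R_coe g ⟨z, hz⟩] using (g • (⟨z, hz⟩ : ℍ)).im_pos

theorem im_moebSL2R_neg (g : SL(2, ℝ)) {z : ℂ} (hz : z.im < 0) : (moebSL2R g z).im < 0 := by
  have := im_moebSL2R_pos g (z := conj z) (by simpa using hz)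
  rwa [moebSL2R_conj, Complex.conj_im, neg_pos] at this

theorem exp_two_mul_I_mul_I (φ : ℝ) :
    Complex.exp (2 * φ * Complex.I) * Complex.I = ⟨-Real.sin (2 * φ), Real.cos (2 * φ)⟩ := by
  apply Complex.ext <;> simp [Complex.mul_re, Complex.mul_im, Complex.exp_re, Complex.exp_im]

theorem im_exp_two_mul_I_mul_I_pos {φ : ℝ} (hφ : φ ∈ Set.Ioo (-(π / 4)) (π / 4)) :
    0 < (Complex.exp (2 * φ * Complex.I) * Complex.I).im := by
  rw [exp_two_mul_I_mul_I]
  exact Real.cos_pos_of_mem_Ioo ⟨by linarith [hφ.1], by linarith [hφ.2]⟩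

theorem exists_moebSL2R_eq_of_im_pos_of_im_neg {z w : ℂ} (hz : 0 < z.im) (hw : w.im < 0) :
    ∃ g : SL(2, ℝ), ∃ φ ∈ Set.Ioo (-(π / 4)) (π / 4),
      moebSL2R g (Complex.exp (2 * φ * Complex.I) * Complex.I) = z ∧
      moebSL2R g (-(Complex.exp (2 * φ * Complex.I) * Complex.I)) = w := by
  let Z : ℍ := ⟨z, hz⟩
  let W : ℍ := ⟨conj w, by simpa using hw⟩
  set T := sinh (dist Z W / 2)
  have hT : 0 ≤ T := Real.sinh_nonneg_iff.2 (by positivity)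
  set φ := arctan T / 2 with hφ_def
  have hφ : φ ∈ Set.Ioo (-(π / 4)) (π / 4) :=
    ⟨by linarith [neg_pi_div_two_lt_arctan T], by linarith [arctan_lt_pi_div_two T]⟩
  set p := Complex.exp (2 * φ * Complex.I) * Complex.I with hp_def
  have hp : p = ⟨-sin (arctan T), cos (arctan T)⟩ := by
    rw [hp_def, exp_two_mul_I_mul_I, hφ_def, mul_div_cancel₀ _ two_ne_zero]
  let P : ℍ := ⟨p, im_exp_two_mul_I_mul_I_pos hφ⟩
  let Q : ℍ := ⟨conj (-p), by
    rw [Complex.conj_im, Complex.neg_im, neg_neg]; exact P.im_pos⟩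
  have hPQ : dist P Q = dist Z W := by
    have hdist : dist (P : ℂ) Q = 2 * |sin (arctan T)| := by
      rw [Complex.dist_eq, show (P : ℂ) - Q = p + conj p by simp [P, Q], Complex.add_conj, hp]
      simp [-Complex.ofReal_sin]
    have him : P.im * Q.im = cos (arctan T) ^ 2 := by simp [P, Q, hp, sq]
    rw [dist_eq_iff_eq_sinh, hdist, him, Real.sqrt_sq (cos_arctan_pos T).le,
      mul_div_mul_left _ _ two_ne_zero, ← abs_of_pos (cos_arctan_pos T), ← abs_div,
      ← tan_eq_sin_div_cos, tan_arctan, abs_of_nonneg hT]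
  obtain ⟨g, hgP, hgQ⟩ := exists_smul_eq_smul_eq_of_dist_eq hPQ
  refine ⟨g, φ, hφ, ?_, ?_⟩
  · change moebSL2R g P = z
    rw [moebSL2R_coe, hgP]
  · rw [← Complex.conj_conj (-p), moebSL2R_conj]
    change conj (moebSL2R g Q) = w
    rw [moebSL2R_coe, hgQ]
    exact Complex.conj_conj w

/-- Elliptic parameterization of the crown domain: `Ξ = G exp(iΩ)·x₀`. -/
theorem crown_elliptic_parameterization :
    {p : ℂ × ℂ | ∃ g : Matrix.SpecialLinearGroup (Fin 2) ℝ, ∃ φ : ℝ,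
        φ ∈ Set.Ioo (-(π / 4)) (π / 4) ∧
        p = (moebSL2R g (Complex.exp (2 * φ * Complex.I) * Complex.I),
             moebSL2R g (-(Complex.exp (2 * φ * Complex.I) * Complex.I)))} =
      {p : ℂ × ℂ | 0 < p.1.im ∧ p.2.im < 0} := by
  ext ⟨z, w⟩
  simp only [Set.mem_ofPred_eq, Prod.mk.injEq]
  constructor
  · rintro ⟨g, φ, hφ, rfl, rfl⟩
    have hp := im_exp_two_mul_I_mul_I_pos hφ
    exact ⟨im_moebSL2R_pos g hp, im_moebSL2R_neg g (by simpa using hp)⟩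
  · rintro ⟨hz, hw⟩
    obtain ⟨g, φ, hφ, hgz, hgw⟩ := exists_moebSL2R_eq_of_im_pos_of_im_neg hz hw
    exact ⟨g, φ, hφ, hgz.symm, hgw.symm⟩
end

section
/- Matching of elliptic and unipotent G-orbits: for every φ ∈ (−π/4, π/4), the SL(2,ℝ)-orbit of the point (i + i·sin(2φ), −i + i·sin(2φ)) equals the SL(2,ℝ)-orbit of the point (e^{2iφ}·i, −e^{2iφ}·i); that is, {(g·(i + i sin 2φ), g·(−i + i sin 2φ)) : g ∈ SL(2,ℝ)} = {(g·(e^{2iφ}i), g·(−e^{2iφ}i)) : g ∈ SL(2,ℝ)} as subsets of ℂ×ℂ. -/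
open Real

lemma aux_denom (c d : ℝ) (z : ℂ) (hz : z.im ≠ 0) (h : c = 0 → d ≠ 0) :
    (c : ℂ) * z + d ≠ 0 := by
  intro he
  have him : c * z.im = 0 := by
    have := congrArg Complex.im he
    simpa using this
  have hc : c = 0 := by
    rcases mul_eq_zero.mp him with h' | h'
    · exact h'
    · exact absurd h' hz
  have hre : d = 0 := by
    have := congrArg Complex.re he
    simp [hc] at this
    exact this
  exact h hc hre

lemma sl2_denom_ne_zero (g : Matrix.SpecialLinearGroup (Fin 2) ℝ) (z : ℂ) (hz : z.im ≠ 0) :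
    (((g : Matrix (Fin 2) (Fin 2) ℝ) 1 0 : ℂ) * z + ((g : Matrix (Fin 2) (Fin 2) ℝ) 1 1 : ℂ)) ≠ 0 := by
  apply aux_denom _ _ _ hz
  intro hc hd
  have hdet := g.2
  rw [Matrix.det_fin_two] at hdet
  rw [hc, hd] at hdet
  simp at hdet

lemma moeb_mul (g h : Matrix.SpecialLinearGroup (Fin 2) ℝ) (z w : ℂ)
    (hz : z.im ≠ 0) (hw : w.im ≠ 0) (hmap : moebSL2R h z = w) :
    moebSL2R (g * h) z = moebSL2R g w := by
  set a := ((g : Matrix (Fin 2) (Fin 2) ℝ) 0 0 : ℂ)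
  set b := ((g : Matrix (Fin 2) (Fin 2) ℝ) 0 1 : ℂ)
  set c := ((g : Matrix (Fin 2) (Fin 2) ℝ) 1 0 : ℂ)
  set d := ((g : Matrix (Fin 2) (Fin 2) ℝ) 1 1 : ℂ)
  set a' := ((h : Matrix (Fin 2) (Fin 2) ℝ) 0 0 : ℂ)
  set b' := ((h : Matrix (Fin 2) (Fin 2) ℝ) 0 1 : ℂ)
  set c' := ((h : Matrix (Fin 2) (Fin 2) ℝ) 1 0 : ℂ)
  set d' := ((h : Matrix (Fin 2) (Fin 2) ℝ) 1 1 : ℂ)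
  have hDh : c' * z + d' ≠ 0 := sl2_denom_ne_zero h z hz
  have hDg : c * w + d ≠ 0 := sl2_denom_ne_zero g w hw
  have hNh : a' * z + b' = w * (c' * z + d') := by
    rw [← hmap]
    unfold moebSL2R
    rw [div_mul_cancel₀ _ hDh]
  have hDgh : (c * a' + d * c') * z + (c * b' + d * d') = (c * w + d) * (c' * z + d') := by
    linear_combination c * hNh
  have hent : ∀ i j, (((g * h : Matrix.SpecialLinearGroup (Fin 2) ℝ) :
      Matrix (Fin 2) (Fin 2) ℝ) i j : ℂ) =
      ((g : Matrix (Fin 2) (Fin 2) ℝ) i 0 : ℂ) * ((h : Matrix (Fin 2) (Fin 2) ℝ) 0 j : ℂ) +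
      ((g : Matrix (Fin 2) (Fin 2) ℝ) i 1 : ℂ) * ((h : Matrix (Fin 2) (Fin 2) ℝ) 1 j : ℂ) := by
    intro i j
    push_cast [Matrix.SpecialLinearGroup.coe_mul, Matrix.mul_apply, Fin.sum_univ_two]
    ring
  unfold moebSL2R
  rw [hent, hent, hent, hent]
  rw [div_eq_div_iff (by rw [show (c * a' + d * c') * z + (c * b' + d * d') = _ from hDgh]; exact mul_ne_zero hDg hDh) hDg]
  linear_combination (a * (c * w + d) - c * (a * w + b)) * hNh

/-- Matching of elliptic and unipotent `G`-orbits in the crown: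
`G·n_{i sin 2φ}·x₀ = G·exp(iφ diag(1,-1))·x₀` for `|φ| < π/4`. -/
theorem elliptic_unipotent_orbit_matching (φ : ℝ) (hφ : φ ∈ Set.Ioo (-(π / 4)) (π / 4)) :
    {p : ℂ × ℂ | ∃ g : Matrix.SpecialLinearGroup (Fin 2) ℝ,
        p = (moebSL2R g (Complex.I + Complex.I * Real.sin (2 * φ)),
             moebSL2R g (-Complex.I + Complex.I * Real.sin (2 * φ)))} =
      {p : ℂ × ℂ | ∃ g : Matrix.SpecialLinearGroup (Fin 2) ℝ,
        p = (moebSL2R g (Complex.exp (2 * φ * Complex.I) * Complex.I),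
             moebSL2R g (-(Complex.exp (2 * φ * Complex.I) * Complex.I)))} := by
  obtain ⟨hp1, hp2⟩ := hφ
  have hc : 0 < Real.cos (2 * φ) := by
    apply Real.cos_pos_of_mem_Ioo
    constructor <;> [linarith; linarith]
  set s := Real.sin (2 * φ) with hs
  set c := Real.cos (2 * φ) with hcdef
  have hpyth : s ^ 2 + c ^ 2 = 1 := Real.sin_sq_add_cos_sq (2 * φ)
  set r := Real.sqrt (2 * c) with hr
  have hr2 : r ^ 2 = 2 * c := Real.sq_sqrt (by linarith)
  have hrpos : 0 < r := Real.sqrt_pos.mpr (by linarith)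
  have hdet : Matrix.det !![-1/r, -c/r; 1/r, -c/r] = 1 := by
    rw [Matrix.det_fin_two_of]
    field_simp
    nlinarith [hr2]
  set h : Matrix.SpecialLinearGroup (Fin 2) ℝ := ⟨!![-1/r, -c/r; 1/r, -c/r], hdet⟩ with hh
  have e00 : ((h : Matrix (Fin 2) (Fin 2) ℝ) 0 0) = -1/r := rfl
  have e01 : ((h : Matrix (Fin 2) (Fin 2) ℝ) 0 1) = -c/r := rfl
  have e10 : ((h : Matrix (Fin 2) (Fin 2) ℝ) 1 0) = 1/r := rfl
  have e11 : ((h : Matrix (Fin 2) (Fin 2) ℝ) 1 1) = -c/r := rfl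
  have hI : Complex.I ^ 2 = -1 := Complex.I_sq
  have hwexp : Complex.exp (2 * φ * Complex.I) * Complex.I = ((-s : ℝ) : ℂ) + (c : ℝ) * Complex.I := by
    have h1 : ((2 : ℂ) * (φ : ℂ) * Complex.I) = ((2*φ : ℝ) : ℂ) * Complex.I := by push_cast; ring
    rw [h1, Complex.exp_mul_I, ← Complex.ofReal_cos, ← Complex.ofReal_sin]
    rw [Complex.ofReal_neg]
    linear_combination ((s : ℝ) : ℂ) * hI
  have hz1im : (Complex.I + Complex.I * (s : ℝ)).im ≠ 0 := by
    simp only [Complex.add_im, Complex.I_im, Complex.mul_im, Complex.I_re, Complex.ofReal_im,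
      Complex.I_im, Complex.ofReal_re]
    nlinarith [hpyth, hc]
  have hz2im : (-Complex.I + Complex.I * (s : ℝ)).im ≠ 0 := by
    simp only [Complex.add_im, Complex.neg_im, Complex.I_im, Complex.mul_im, Complex.I_re,
      Complex.ofReal_im, Complex.I_im, Complex.ofReal_re]
    nlinarith [hpyth, hc]
  have hw1im : (Complex.exp (2 * φ * Complex.I) * Complex.I).im ≠ 0 := by
    rw [hwexp]; simp; positivity
  have hw2im : (-(Complex.exp (2 * φ * Complex.I) * Complex.I)).im ≠ 0 := by
    rw [hwexp]; simp; positivity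
  have hpythC : ((s:ℝ):ℂ) ^ 2 + ((c:ℝ):ℂ) ^ 2 = 1 := by exact_mod_cast hpyth
  have hmap1 : moebSL2R h (Complex.I + Complex.I * (s : ℝ)) =
      Complex.exp (2 * φ * Complex.I) * Complex.I := by
    rw [hwexp]
    unfold moebSL2R
    rw [e00, e01, e10, e11]
    rw [div_eq_iff (aux_denom (1/r) (-c/r) _ hz1im (fun h0 => absurd h0 (by positivity)))]
    push_cast
    linear_combination (Complex.I / r) * hpythC - (((c:ℂ) * (1 + (s:ℂ))) / r) * hI
  have hmap2 : moebSL2R h (-Complex.I + Complex.I * (s : ℝ)) =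
      -(Complex.exp (2 * φ * Complex.I) * Complex.I) := by
    rw [hwexp]
    unfold moebSL2R
    rw [e00, e01, e10, e11]
    rw [div_eq_iff (aux_denom (1/r) (-c/r) _ hz2im (fun h0 => absurd h0 (by positivity)))]
    push_cast
    linear_combination (-Complex.I / r) * hpythC + (((c:ℂ) * ((s:ℂ) - 1)) / r) * hI
  ext p
  simp only [Set.mem_setOf_eq]
  constructor
  · rintro ⟨g, rfl⟩
    refine ⟨g * h⁻¹, ?_⟩
    have k1 := moeb_mul (g * h⁻¹) h _ _ hz1im hw1im hmap1
    have k2 := moeb_mul (g * h⁻¹) h _ _ hz2im hw2im hmap2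
    rw [inv_mul_cancel_right] at k1 k2
    rw [k1, k2]
  · rintro ⟨g, rfl⟩
    exact ⟨g * h, by
      rw [moeb_mul g h _ _ hz1im hw1im hmap1, moeb_mul g h _ _ hz2im hw2im hmap2]⟩
end

section
/- The connected component containing the base point of the intersection of all G-translates of the affine open piece is the crown: let D = {(u,v) ∈ ℂ×ℂ : u ≠ v and for every g ∈ SL(2,ℝ), g₁₀·u + g₁₁ ≠ 0 and g₁₀·v + g₁₁ ≠ 0}. Then the connected component of D containing the point (i, −i) equals {(u,v) ∈ ℂ×ℂ : Im u > 0 and Im v < 0}. -/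
open Set Complex

/-- If `Im z ≠ 0` then for any `g ∈ SL(2,ℝ)`, `c z + d ≠ 0`. -/
lemma crown_aux_ne {z : ℂ} (hz : z.im ≠ 0) (g : Matrix.SpecialLinearGroup (Fin 2) ℝ) :
    ((g : Matrix (Fin 2) (Fin 2) ℝ) 1 0 : ℂ) * z + ((g : Matrix (Fin 2) (Fin 2) ℝ) 1 1 : ℂ) ≠ 0 := by
  intro h
  set c : ℝ := (g : Matrix (Fin 2) (Fin 2) ℝ) 1 0
  set d : ℝ := (g : Matrix (Fin 2) (Fin 2) ℝ) 1 1
  have him : c * z.im = 0 := by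
    have := congrArg Complex.im h
    simpa using this
  have hc : c = 0 := by
    rcases mul_eq_zero.1 him with h' | h'
    · exact h'
    · exact absurd h' hz
  have hd : d = 0 := by
    have := congrArg Complex.re h
    simp [hc] at this
    exact_mod_cast this
  have hdet := g.2
  rw [Matrix.det_fin_two] at hdet
  rw [show (g : Matrix (Fin 2) (Fin 2) ℝ) 1 0 = c from rfl,
    show (g : Matrix (Fin 2) (Fin 2) ℝ) 1 1 = d from rfl, hc, hd] at hdet
  simp at hdet

/-- If `Im z = 0` then there is `g ∈ SL(2,ℝ)` with `c z + d = 0`. -/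
lemma crown_aux_exists {z : ℂ} (hz : z.im = 0) :
    ∃ g : Matrix.SpecialLinearGroup (Fin 2) ℝ,
      ((g : Matrix (Fin 2) (Fin 2) ℝ) 1 0 : ℂ) * z + ((g : Matrix (Fin 2) (Fin 2) ℝ) 1 1 : ℂ) = 0 := by
  refine ⟨⟨!![0, -1; 1, -z.re], by simp [Matrix.det_fin_two]⟩, ?_⟩
  simp only [Matrix.SpecialLinearGroup.coe_mk]
  simp [Matrix.cons_val_one, Matrix.head_cons, Matrix.cons_val_zero]
  exact Complex.ext (by simp) (by simp [hz])

/-- The connected component containing the base point `(i,-i)` of the intersection of all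
`G`-translates of the affine open piece `N_ℂ A_ℂ·x₀` is the crown domain. -/
theorem crown_as_connected_component :
    connectedComponentIn
      {p : ℂ × ℂ | p.1 ≠ p.2 ∧
        ∀ g : Matrix.SpecialLinearGroup (Fin 2) ℝ,
          ((g : Matrix (Fin 2) (Fin 2) ℝ) 1 0 : ℂ) * p.1 +
              ((g : Matrix (Fin 2) (Fin 2) ℝ) 1 1 : ℂ) ≠ 0 ∧
          ((g : Matrix (Fin 2) (Fin 2) ℝ) 1 0 : ℂ) * p.2 +
              ((g : Matrix (Fin 2) (Fin 2) ℝ) 1 1 : ℂ) ≠ 0}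
      (Complex.I, -Complex.I) =
    {p : ℂ × ℂ | 0 < p.1.im ∧ p.2.im < 0} := by
  set D : Set (ℂ × ℂ) := {p : ℂ × ℂ | p.1 ≠ p.2 ∧
        ∀ g : Matrix.SpecialLinearGroup (Fin 2) ℝ,
          ((g : Matrix (Fin 2) (Fin 2) ℝ) 1 0 : ℂ) * p.1 +
              ((g : Matrix (Fin 2) (Fin 2) ℝ) 1 1 : ℂ) ≠ 0 ∧
          ((g : Matrix (Fin 2) (Fin 2) ℝ) 1 0 : ℂ) * p.2 +
              ((g : Matrix (Fin 2) (Fin 2) ℝ) 1 1 : ℂ) ≠ 0} with hDdef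
  set Ξ : Set (ℂ × ℂ) := {p : ℂ × ℂ | 0 < p.1.im ∧ p.2.im < 0} with hXdef
  have hmemΞ : (Complex.I, -Complex.I) ∈ Ξ := by
    constructor <;> simp
  have hΞD : Ξ ⊆ D := by
    rintro ⟨u, v⟩ ⟨hu, hv⟩
    refine ⟨?_, fun g => ⟨crown_aux_ne (by simp; linarith) g, crown_aux_ne (by simp; linarith) g⟩⟩
    intro h
    rw [Complex.ext_iff] at h
    simp only at hu hv
    linarith [h.2]
  have hΞconv : Convex ℝ Ξ := by
    have : Ξ = {z : ℂ | 0 < z.im} ×ˢ {z : ℂ | z.im < 0} := by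
      ext p; simp [hXdef, Set.mem_prod]
    rw [this]
    exact (convex_halfSpace_im_gt 0).prod (convex_halfSpace_im_lt 0)
  have hΞopen : IsOpen Ξ := by
    have h1 : IsOpen {p : ℂ × ℂ | 0 < p.1.im} :=
      isOpen_lt continuous_const (Complex.continuous_im.comp continuous_fst)
    have h2 : IsOpen {p : ℂ × ℂ | p.2.im < 0} :=
      isOpen_lt (Complex.continuous_im.comp continuous_snd) continuous_const
    exact h1.inter h2
  have hmemD : (Complex.I, -Complex.I) ∈ D := hΞD hmemΞ
  apply Set.Subset.antisymm
  · -- C ⊆ Ξ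
    set U : Set (ℂ × ℂ) := {p : ℂ × ℂ | p.1.im < 0 ∨ 0 < p.2.im} with hUdef
    have hUopen : IsOpen U := by
      have h1 : IsOpen {p : ℂ × ℂ | p.1.im < 0} :=
        isOpen_lt (Complex.continuous_im.comp continuous_fst) continuous_const
      have h2 : IsOpen {p : ℂ × ℂ | 0 < p.2.im} :=
        isOpen_lt continuous_const (Complex.continuous_im.comp continuous_snd)
      exact h1.union h2
    have hDsub : D ⊆ Ξ ∪ U := by
      rintro ⟨u, v⟩ ⟨_, hg⟩
      have hu : u.im ≠ 0 := by
        intro h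
        obtain ⟨g, hgz⟩ := crown_aux_exists h
        exact (hg g).1 hgz
      have hv : v.im ≠ 0 := by
        intro h
        obtain ⟨g, hgz⟩ := crown_aux_exists h
        exact (hg g).2 hgz
      rcases lt_or_gt_of_ne hu with h | h
      · exact Or.inr (Or.inl h)
      · rcases lt_or_gt_of_ne hv with h' | h'
        · exact Or.inl ⟨h, h'⟩
        · exact Or.inr (Or.inr h')
    intro p hp
    by_contra hpΞ
    have hC : IsPreconnected (connectedComponentIn D (Complex.I, -Complex.I)) :=
      isPreconnected_connectedComponentIn
    have hCD : connectedComponentIn D (Complex.I, -Complex.I) ⊆ D :=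
      connectedComponentIn_subset D _
    have hpU : p ∈ U := (hDsub (hCD hp)).resolve_left hpΞ
    obtain ⟨q, hqC, hqΞ, hqU⟩ := hC Ξ U hΞopen hUopen (hCD.trans hDsub)
      ⟨(Complex.I, -Complex.I), mem_connectedComponentIn hmemD, hmemΞ⟩
      ⟨p, hp, hpU⟩
    rcases hqU with h | h
    · exact absurd hqΞ.1 (by linarith)
    · exact absurd hqΞ.2 (by linarith)
  · exact hΞconv.isPreconnected.subset_connectedComponentIn hmemΞ hΞD
end

section
/- Complex convexity theorem for SL(2,ℝ): for every φ ∈ (−π/4, π/4), the set { (1/2)·arg( cos(2φ) + i·sin(2φ)·cos(2θ) ) : θ ∈ ℝ } equals the closed interval [−|φ|, |φ|]. (Here arg is the principal argument; the real part cos(2φ) of the argument of arg is strictly positive, so the principal branch applies.) -/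
open Real

lemma arg_add_mul_I (a b : ℝ) (ha : 0 < a) :
    Complex.arg ((a : ℂ) + (b : ℝ) * Complex.I) = Real.arctan (b / a) := by
  have hre : ((a : ℂ) + (b : ℝ) * Complex.I).re = a := by simp
  have him : ((a : ℂ) + (b : ℝ) * Complex.I).im = b := by simp
  have htan := Complex.tan_arg ((a : ℂ) + (b : ℝ) * Complex.I)
  rw [hre, him] at htan
  have hmem : |Complex.arg ((a : ℂ) + (b : ℝ) * Complex.I)| < π / 2 := by
    rw [Complex.abs_arg_lt_pi_div_two_iff, hre]
    exact Or.inl ha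
  rw [abs_lt] at hmem
  rw [← htan, Real.arctan_tan (by linarith [hmem.1]) hmem.2]

/-- Complex convexity theorem for `SL(2,ℝ)`:
`Im log a_ℂ(K exp(iφ·diag(1,-1))·x₀) = [-|φ|, |φ|]` for `|φ| < π/4`, expressed through the
explicit formula for the Iwasawa projection along the `K`-orbit. -/
theorem complex_convexity_SL2 (φ : ℝ) (hφ : φ ∈ Set.Ioo (-(π / 4)) (π / 4)) :
    {x : ℝ | ∃ θ : ℝ, x = (1 / 2) *
        Complex.arg ((Real.cos (2 * φ) : ℂ) +
          (Real.sin (2 * φ) * Real.cos (2 * θ) : ℝ) * Complex.I)} =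
      Set.Icc (-|φ|) |φ| := by
  obtain ⟨h1, h2⟩ := hφ
  have h2φ : 2 * φ ∈ Set.Ioo (-(π / 2)) (π / 2) := ⟨by linarith, by linarith⟩
  have hcos : 0 < Real.cos (2 * φ) := Real.cos_pos_of_mem_Ioo h2φ
  -- the function θ ↦ (1/2) arctan (sin 2φ cos 2θ / cos 2φ)
  set f : ℝ → ℝ := fun θ => (1 / 2) * Real.arctan (Real.sin (2 * φ) * Real.cos (2 * θ) / Real.cos (2 * φ)) with hf
  have harg : ∀ θ : ℝ, (1 / 2 : ℝ) *
      Complex.arg ((Real.cos (2 * φ) : ℂ) +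
        (Real.sin (2 * φ) * Real.cos (2 * θ) : ℝ) * Complex.I) = f θ := by
    intro θ
    rw [hf, arg_add_mul_I _ _ hcos]
  have hset : {x : ℝ | ∃ θ : ℝ, x = (1 / 2) *
        Complex.arg ((Real.cos (2 * φ) : ℂ) +
          (Real.sin (2 * φ) * Real.cos (2 * θ) : ℝ) * Complex.I)} = Set.range f := by
    ext x
    simp only [Set.mem_setOf_eq, Set.mem_range]
    constructor
    · rintro ⟨θ, rfl⟩; exact ⟨θ, (harg θ).symm⟩
    · rintro ⟨θ, rfl⟩; exact ⟨θ, (harg θ).symm⟩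
  rw [hset]
  have hf0 : f 0 = φ := by
    simp only [hf, mul_zero, Real.cos_zero, mul_one]
    rw [← Real.tan_eq_sin_div_cos, Real.arctan_tan h2φ.1 h2φ.2]
    ring
  have hfpi : f (π / 2) = -φ := by
    simp only [hf]
    rw [show 2 * (π / 2) = π by ring, Real.cos_pi]
    rw [show Real.sin (2 * φ) * (-1) / Real.cos (2 * φ) = -(Real.sin (2*φ) / Real.cos (2*φ)) by ring,
      ← Real.tan_eq_sin_div_cos, Real.arctan_neg, Real.arctan_tan h2φ.1 h2φ.2]
    ring
  apply Set.Subset.antisymm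
  · -- range f ⊆ Icc
    rintro x ⟨θ, rfl⟩
    have hb : |Real.sin (2 * φ) * Real.cos (2 * θ) / Real.cos (2 * φ)| ≤ |Real.tan (2 * φ)| := by
      rw [Real.tan_eq_sin_div_cos, abs_div, abs_div, abs_mul]
      gcongr
      exact mul_le_of_le_one_right (abs_nonneg _) (Real.abs_cos_le_one _)
    have habs : |Real.arctan (Real.sin (2 * φ) * Real.cos (2 * θ) / Real.cos (2 * φ))| ≤ |2 * φ| := by
      have h1' : Real.arctan |Real.tan (2*φ)| = |2*φ| := by
        rcases le_total 0 (2*φ) with hp | hn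
        · rw [abs_of_nonneg (Real.tan_nonneg_of_nonneg_of_le_pi_div_two hp (le_of_lt h2φ.2)),
            Real.arctan_tan h2φ.1 h2φ.2, abs_of_nonneg hp]
        · rw [show |Real.tan (2*φ)| = Real.tan (-(2*φ)) by
            rw [Real.tan_neg]
            exact (abs_of_nonpos (Real.tan_nonpos_of_nonpos_of_neg_pi_div_two_le hn
              (le_of_lt h2φ.1))).trans rfl,
            Real.arctan_tan (by linarith [h2φ.2]) (by linarith [h2φ.1]), abs_of_nonpos hn]
      calc |Real.arctan _| ≤ Real.arctan |Real.tan (2*φ)| := by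
            rw [abs_le]
            constructor
            · rw [← Real.arctan_neg]
              exact Real.arctan_strictMono.monotone (by linarith [abs_le.mp hb |>.1])
            · exact Real.arctan_strictMono.monotone (abs_le.mp hb).2
        _ = |2*φ| := h1'
    rw [Set.mem_Icc, hf]
    have : |2 * φ| = 2 * |φ| := by rw [abs_mul, abs_two]
    rw [this] at habs
    rw [abs_le] at habs
    constructor <;> linarith [habs.1, habs.2]
  · -- Icc ⊆ range f
    have hcont : Continuous f := by
      apply Continuous.mul continuous_const
      exact Real.continuous_arctan.comp (by continuity)
    have key := intermediate_value_uIcc (a := 0) (b := π / 2) hcont.continuousOn (f := f)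
    rw [hf0, hfpi] at key
    have huIcc : Set.uIcc φ (-φ) = Set.Icc (-|φ|) |φ| := by
      rcases le_total 0 φ with h | h
      · rw [abs_of_nonneg h, Set.uIcc_of_ge (by linarith)]
      · rw [abs_of_nonpos h, Set.uIcc_of_le (by linarith), neg_neg]
    rw [huIcc] at key
    exact key.trans (Set.image_subset_range f _)
end

section
/- Realization of G exp(iω)·x₀ in the complexified Cartan decomposition (G exp(iω)·x₀ ⊆ X_ℂ(ω)): let 0 < r ≤ π/4. For every g = [[a,b],[c,d]] ∈ SL(2,ℝ) and every φ ∈ ℝ with |φ| < r, there exist t > 0 and ψ ∈ ℝ with |ψ| < r such that trace( g · diag(e^{2iφ}, e^{−2iφ}) · gᵀ ) = e^{2iφ}(a²+c²) + e^{−2iφ}(b²+d²) = t·e^{2iψ} + t⁻¹·e^{−2iψ}. -/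
open Real Matrix

lemma exists_t (P Q : ℝ) (hP : 0 < P) (h : P^2 = Q^2 + 4) :
    ∃ t : ℝ, 0 < t ∧ t + 1/t = P ∧ t - 1/t = Q := by
  have hPQ : 0 < P + Q := by nlinarith [sq_nonneg (P + Q), sq_nonneg (P - Q)]
  have hmul : (P+Q)/2 * ((P-Q)/2) = 1 := by linear_combination h/4
  refine ⟨(P+Q)/2, by linarith, ?_, ?_⟩ <;>
  · rw [one_div, inv_eq_of_mul_eq_one_right hmul]; ring

lemma key (r φ u v : ℝ) (hr0 : 0 < r) (hr : r ≤ π/4) (hφ : |φ| < r)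
    (hu : 0 < u) (hv : 0 < v) (huv : 1 ≤ u * v) :
    ∃ t ψ : ℝ, 0 < t ∧ |ψ| < r ∧
      (t + 1/t) * Real.cos (2*ψ) = (u+v) * Real.cos (2*φ) ∧
      (t - 1/t) * Real.sin (2*ψ) = (u-v) * Real.sin (2*φ) := by
  have hπ : π/4 ≤ π/2 := by linarith [Real.pi_pos]
  have habs2 : |2*φ| = 2*|φ| := by rw [abs_mul]; norm_num
  have hφ2 : |2*φ| < π/2 := by rw [habs2]; linarith
  have hφr : |2*φ| < 2*r := by rw [habs2]; linarith
  have hcosφ : 0 < Real.cos (2*φ) :=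
    Real.cos_pos_of_mem_Ioo ⟨by linarith [neg_abs_le (2*φ)], by linarith [le_abs_self (2*φ)]⟩
  set A := (u+v) * Real.cos (2*φ) with hA_def
  set B := (u-v) * Real.sin (2*φ) with hB_def
  clear_value A B
  have hA : 0 < A := by rw [hA_def]; exact mul_pos (by linarith) hcosφ
  have hsc : Real.sin (2*φ)^2 + Real.cos (2*φ)^2 = 1 := Real.sin_sq_add_cos_sq _
  have huv2 : 2 ≤ u + v := by nlinarith [sq_nonneg (u - v)]
  by_cases hB0 : B = 0
  · by_cases hA2 : 2 ≤ A
    · have hnn : (0:ℝ) ≤ A^2 - 4 := by nlinarith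
      obtain ⟨t, ht, h1, h2⟩ := exists_t A (Real.sqrt (A^2-4)) hA
        (by rw [Real.sq_sqrt hnn]; ring)
      exact ⟨t, 0, ht, by simpa using hr0, by simpa using h1, by simp [← hB_def, hB0]⟩
    · push_neg at hA2
      have hA2' : A / 2 < 1 := by linarith
      have hAcos : Real.cos (2*φ) ≤ A / 2 := by nlinarith
      refine ⟨1, Real.arccos (A/2) / 2, one_pos, ?_, ?_, by simp [← hB_def, hB0]⟩
      · have h1 : Real.arccos (A/2) ≤ Real.arccos (Real.cos (2*φ)) := by
          rw [Real.arccos_eq_pi_div_two_sub_arcsin, Real.arccos_eq_pi_div_two_sub_arcsin]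
          linarith [Real.monotone_arcsin hAcos]
        have h2 : Real.arccos (Real.cos (2*φ)) = |2*φ| := by
          rw [← Real.cos_abs]
          exact Real.arccos_cos (abs_nonneg _) (by linarith)
        have h3 : 0 ≤ Real.arccos (A/2) := Real.arccos_nonneg _
        rw [abs_of_nonneg (by linarith)]
        linarith
      · have : Real.cos (2 * (Real.arccos (A/2) / 2)) = A/2 := by
          rw [show 2 * (Real.arccos (A/2) / 2) = Real.arccos (A/2) by ring]
          exact Real.cos_arccos (by linarith) (by linarith)
        rw [this]; ring
  · -- B ≠ 0
    have hB2 : 0 < B^2 := by positivity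
    set s := Real.sin (2*φ)^2 with hs_def
    clear_value s
    have hs0 : 0 < s := by
      rcases mul_ne_zero_iff.mp (by rwa [hB_def] at hB0) with ⟨_, h2⟩
      rw [hs_def]; positivity
    have hs1 : s < 1 := by nlinarith [pow_pos hcosφ 2]
    have hc2 : Real.cos (2*φ)^2 = 1 - s := by linarith
    set C := A^2 + B^2 - 4 with hC_def
    set D := Real.sqrt (C^2 + 16*B^2) with hD_def
    clear_value C
    have hD : D^2 = C^2 + 16*B^2 := by rw [hD_def]; exact Real.sq_sqrt (by positivity)
    clear_value D
    have hDnn : 0 ≤ D := by rw [hD_def]; exact Real.sqrt_nonneg _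
    set x := (-C + D)/8 with hx_def
    clear_value x
    have hx0 : 0 < x := by
      have hCD2 : C^2 < D^2 := by rw [hD]; linarith
      have hCD : C < D := lt_of_pow_lt_pow_left₀ 2 hDnn hCD2
      rw [hx_def]; linarith
    have hquad : 4*x^2 + C*x - B^2 = 0 := by
      rw [hx_def]; linear_combination hD/16
    have hAs : A^2 = (u+v)^2 * (1 - s) := by
      rw [hA_def]; linear_combination (u+v)^2 * hc2
    have hBs : B^2 = (u-v)^2 * s := by rw [hB_def, hs_def]; ring
    have hqs : 0 ≤ 4*s^2 + C*s - B^2 := by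
      have heq : 4*s^2 + C*s - B^2 = s*(1-s)*(4*(u*v) - 4) := by
        rw [hC_def, hAs, hBs]; ring
      rw [heq]
      have := mul_nonneg (mul_nonneg hs0.le (by linarith : (0:ℝ) ≤ 1-s))
        (by linarith : (0:ℝ) ≤ 4*(u*v) - 4)
      linarith
    have h6 : s * (4*x^2 + C*x - B^2) = 0 := by rw [hquad]; ring
    have h5 : 0 ≤ (s - x) * (4*s*x + B^2) := by
      have h7 : (s - x) * (4*s*x + B^2)
          = x*(4*s^2 + C*s - B^2) - s*(4*x^2 + C*x - B^2) := by ring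
      rw [h7, hquad, mul_zero, sub_zero]
      exact mul_nonneg hx0.le hqs
    have hM : 0 < 4*s*x + B^2 := by positivity
    have hxs : x ≤ s := by
      by_contra h
      push_neg at h
      have : (s - x) * (4*s*x + B^2) < 0 := mul_neg_of_neg_of_pos (by linarith) hM
      linarith
    have hx1 : x < 1 := lt_of_le_of_lt hxs hs1
    -- define ψ
    set y := Real.sqrt x with hy_def
    have hy2 : y^2 = x := by rw [hy_def]; exact Real.sq_sqrt hx0.le
    have hy0 : 0 < y := by rw [hy_def]; exact Real.sqrt_pos.mpr hx0
    have hy1 : y < 1 := by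
      refine lt_of_pow_lt_pow_left₀ 2 zero_le_one ?_
      rw [hy2, one_pow]; exact hx1
    set ψ := Real.arcsin y / 2 with hψ_def
    have h2ψ : 2 * ψ = Real.arcsin y := by rw [hψ_def]; ring
    have hsinψ : Real.sin (2*ψ) = y := by
      rw [h2ψ]; exact Real.sin_arcsin (by linarith) (by linarith)
    have hcosψ : Real.cos (2*ψ) = Real.sqrt (1 - x) := by
      rw [h2ψ, Real.cos_arcsin, hy2]
    have hψnn : 0 ≤ ψ := by
      rw [hψ_def]; have := Real.arcsin_nonneg.mpr hy0.le; linarith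
    have hψr : |ψ| < r := by
      rw [abs_of_nonneg hψnn]
      have hys : y ≤ Real.sqrt s := Real.sqrt_le_sqrt hxs
      have hsqs : Real.sqrt s = |Real.sin (2*φ)| := by rw [hs_def, Real.sqrt_sq_eq_abs]
      have habs : |Real.sin (2*φ)| = Real.sin (|2*φ|) := by
        rcases abs_cases (2*φ) with ⟨h1, h2⟩ | ⟨h1, h2⟩
        · rw [h1, abs_of_nonneg (Real.sin_nonneg_of_nonneg_of_le_pi h2 (by linarith [Real.pi_pos]))]
        · rw [h1, Real.sin_neg,
            abs_of_nonpos (Real.sin_nonpos_of_nonpos_of_neg_pi_le h2.le (by linarith [Real.pi_pos]))]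
      have harc : Real.arcsin (Real.sin (|2*φ|)) = |2*φ| :=
        Real.arcsin_sin (by linarith [abs_nonneg (2*φ), Real.pi_pos]) (by linarith)
      have := Real.monotone_arcsin (le_of_le_of_eq hys (by rw [hsqs, habs]))
      rw [harc] at this
      rw [hψ_def]; linarith
    have hsx : Real.sqrt (1-x) > 0 := Real.sqrt_pos.mpr (by linarith)
    have hsx2 : Real.sqrt (1-x)^2 = 1 - x := Real.sq_sqrt (by linarith)
    have h4 : A^2 * x - B^2 * (1-x) = 4*x*(1-x) := by linear_combination hquad - x * hC_def
    obtain ⟨t, ht, h1, h2⟩ := exists_t (A / Real.sqrt (1-x)) (B / y)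
      (div_pos hA hsx)
      (by
        rw [div_pow, div_pow, hsx2, hy2]
        have hx0' : x ≠ 0 := ne_of_gt hx0
        have hx1' : (1:ℝ) - x ≠ 0 := by linarith
        field_simp
        linear_combination h4)
    refine ⟨t, ψ, ht, hψr, ?_, ?_⟩
    · rw [hcosψ, h1, div_mul_cancel₀ _ (ne_of_gt hsx)]
    · rw [hsinψ, h2, div_mul_cancel₀ _ (ne_of_gt hy0)]

/-- `G exp(iω)·x₀ ⊆ X_ℂ(ω)`: in the symmetric-matrix model with invariant `p = trace`,
the trace of any point of `G exp(iω)·x₀` is of the form `t e^{2iψ} + t⁻¹ e^{-2iψ}` with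
`t > 0` and `|ψ| < r`. -/
theorem crown_in_complexified_Cartan (r : ℝ) (hr0 : 0 < r) (hr : r ≤ π / 4)
    (g : Matrix.SpecialLinearGroup (Fin 2) ℝ) (φ : ℝ) (hφ : |φ| < r) :
    ∃ t ψ : ℝ, 0 < t ∧ |ψ| < r ∧
      Matrix.trace
          (((g : Matrix (Fin 2) (Fin 2) ℝ).map Complex.ofReal) *
            Matrix.diagonal ![Complex.exp (2 * φ * Complex.I), Complex.exp (-(2 * φ) * Complex.I)] *
            ((g : Matrix (Fin 2) (Fin 2) ℝ).map Complex.ofReal)ᵀ) =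
        Complex.exp (2 * φ * Complex.I) *
            ((((g : Matrix (Fin 2) (Fin 2) ℝ) 0 0 : ℂ)) ^ 2 +
              (((g : Matrix (Fin 2) (Fin 2) ℝ) 1 0 : ℂ)) ^ 2) +
          Complex.exp (-(2 * φ) * Complex.I) *
            ((((g : Matrix (Fin 2) (Fin 2) ℝ) 0 1 : ℂ)) ^ 2 +
              (((g : Matrix (Fin 2) (Fin 2) ℝ) 1 1 : ℂ)) ^ 2) ∧
      Complex.exp (2 * φ * Complex.I) *
            ((((g : Matrix (Fin 2) (Fin 2) ℝ) 0 0 : ℂ)) ^ 2 +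
              (((g : Matrix (Fin 2) (Fin 2) ℝ) 1 0 : ℂ)) ^ 2) +
          Complex.exp (-(2 * φ) * Complex.I) *
            ((((g : Matrix (Fin 2) (Fin 2) ℝ) 0 1 : ℂ)) ^ 2 +
              (((g : Matrix (Fin 2) (Fin 2) ℝ) 1 1 : ℂ)) ^ 2) =
        (t : ℂ) * Complex.exp (2 * ψ * Complex.I) +
          (t : ℂ)⁻¹ * Complex.exp (-(2 * ψ) * Complex.I) := by
  have hdet : (g : Matrix (Fin 2) (Fin 2) ℝ) 0 0 * (g : Matrix (Fin 2) (Fin 2) ℝ) 1 1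
      - (g : Matrix (Fin 2) (Fin 2) ℝ) 0 1 * (g : Matrix (Fin 2) (Fin 2) ℝ) 1 0 = 1 := by
    have h := g.prop
    rwa [Matrix.det_fin_two] at h
  set a := (g : Matrix (Fin 2) (Fin 2) ℝ) 0 0 with ha
  set b := (g : Matrix (Fin 2) (Fin 2) ℝ) 0 1 with hb
  set c := (g : Matrix (Fin 2) (Fin 2) ℝ) 1 0 with hc
  set d := (g : Matrix (Fin 2) (Fin 2) ℝ) 1 1 with hd
  have huv : 1 ≤ (a^2 + c^2) * (b^2 + d^2) := by nlinarith [sq_nonneg (a*b + c*d)]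
  have hu : 0 < a^2 + c^2 := by
    by_contra h
    push_neg at h
    have h1 : 0 ≤ a^2 + c^2 := by positivity
    have h2 : 0 ≤ b^2 + d^2 := by positivity
    nlinarith
  have hv : 0 < b^2 + d^2 := by
    by_contra h
    push_neg at h
    have h1 : 0 ≤ a^2 + c^2 := by positivity
    have h2 : 0 ≤ b^2 + d^2 := by positivity
    nlinarith
  obtain ⟨t, ψ, ht, hψ, heq1, heq2⟩ := key r φ (a^2+c^2) (b^2+d^2) hr0 hr hφ hu hv huv
  have hexp : ∀ θ : ℝ, Complex.exp (2 * (θ:ℂ) * Complex.I)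
      = (Real.cos (2*θ) : ℂ) + (Real.sin (2*θ) : ℂ) * Complex.I := by
    intro θ
    rw [show (2 * (θ:ℂ)) = ((2*θ : ℝ) : ℂ) by push_cast; ring, Complex.exp_mul_I,
      ← Complex.ofReal_cos, ← Complex.ofReal_sin]
  have hexpn : ∀ θ : ℝ, Complex.exp (-(2 * (θ:ℂ)) * Complex.I)
      = (Real.cos (2*θ) : ℂ) - (Real.sin (2*θ) : ℂ) * Complex.I := by
    intro θ
    rw [show (-(2 * (θ:ℂ))) = ((-(2*θ) : ℝ) : ℂ) by push_cast; ring, Complex.exp_mul_I,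
      ← Complex.ofReal_cos, ← Complex.ofReal_sin, Real.cos_neg, Real.sin_neg]
    push_cast
    ring
  have H1 : ((t:ℂ) + (t:ℂ)⁻¹) * (Real.cos (2*ψ) : ℂ)
      = (((a:ℂ)^2 + (c:ℂ)^2) + ((b:ℂ)^2 + (d:ℂ)^2)) * (Real.cos (2*φ) : ℂ) := by
    have := congrArg (Complex.ofReal) heq1
    push_cast at this
    convert this using 2 <;> push_cast <;> ring
  have H2 : ((t:ℂ) - (t:ℂ)⁻¹) * (Real.sin (2*ψ) : ℂ)
      = (((a:ℂ)^2 + (c:ℂ)^2) - ((b:ℂ)^2 + (d:ℂ)^2)) * (Real.sin (2*φ) : ℂ) := by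
    have := congrArg (Complex.ofReal) heq2
    push_cast at this
    convert this using 2 <;> push_cast <;> ring
  refine ⟨t, ψ, ht, hψ, ?_, ?_⟩
  · simp [Matrix.trace_fin_two, Matrix.mul_apply, Fin.sum_univ_two, Matrix.diagonal,
      Matrix.map_apply]
    ring
  · rw [hexp φ, hexpn φ, hexp ψ, hexpn ψ]
    linear_combination -H1 - Complex.I * H2
end

section
/- Explicit description of the domains X_ℂ(Ω) and X_ℂ(2Ω): (a) the set {t·e^{2iψ} + t⁻¹·e^{−2iψ} : t > 0, ψ ∈ ℝ, |ψ| < π/4} equals {w ∈ ℂ : Re w > 0}; (b) the set {t·e^{2iψ} + t⁻¹·e^{−2iψ} : t > 0, ψ ∈ ℝ, |ψ| < π/2} equals ℂ ∖ {w ∈ ℂ : Im w = 0 and Re w ≤ −2}. -/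
open Real

/-!
With `z = t e^{2iψ}`, the parameters `t > 0, |ψ| < a` (for `a ≤ π/2`) sweep out exactly the
sector `|arg z| < 2a`, and `t e^{2iψ} + t⁻¹ e^{-2iψ} = z + z⁻¹`. So both sets are images under
the Joukowski map `z ↦ z + z⁻¹`, of the right half-plane and of the slit plane. This map is onto
(`z² - wz + 1` has a root), and `Re (z + z⁻¹) = Re z (1 + |z|⁻²)`,
`Im (z + z⁻¹) = Im z (1 - |z|⁻²)`. Hence it preserves the sign of the real part; a real value
`≤ -2` comes only from a negative real `z`, while on the slit plane a real value comes from
`z > 0` (value `≥ 2`) or from `|z| = 1` (value `2 Re z > -2`).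
-/

theorem add_inv_le_neg_two {x : ℝ} (hx : x < 0) : x + x⁻¹ ≤ -2 := by
  have hsq : x + x⁻¹ + 2 = (x + 1) ^ 2 / x := by
    field_simp [hx.ne]
    ring
  linarith [div_nonpos_of_nonneg_of_nonpos (sq_nonneg (x + 1)) hx.le]

namespace Complex

theorem mul_exp_add_inv_mul_exp_neg (x y : ℂ) :
    x * exp y + x⁻¹ * exp (-y) = x * exp y + (x * exp y)⁻¹ := by
  rw [mul_inv, exp_neg]

theorem arg_ofReal_mul_exp_mul_I {t θ : ℝ} (ht : 0 < t) (hθ : θ ∈ Set.Ioc (-π) π) :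
    arg (t * exp (θ * I)) = θ := by
  rw [arg_real_mul _ ht, arg_exp_mul_I, toIocMod_eq_self]
  simpa [neg_add_eq_sub, sub_eq_add_neg, two_mul, ← add_assoc] using hθ

theorem setOf_ne_zero_abs_arg_lt_pi_div_two :
    {z : ℂ | z ≠ 0 ∧ |arg z| < π / 2} = {z | 0 < z.re} := by
  ext z
  simp only [Set.mem_ofPred_eq, abs_arg_lt_pi_div_two_iff]
  constructor
  · rintro ⟨hz, hre | rfl⟩
    exacts [hre, absurd rfl hz]
  · intro hre
    exact ⟨fun h => by simp [h] at hre, .inl hre⟩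

theorem setOf_ne_zero_abs_arg_lt_pi : {z : ℂ | z ≠ 0 ∧ |arg z| < π} = slitPlane := by
  ext z
  rw [Set.mem_ofPred_eq, mem_slitPlane_iff_arg, abs_lt, and_iff_right (neg_pi_lt_arg z),
    (arg_le_pi z).lt_iff_ne, and_comm]

theorem setOf_polar_add_inv_eq_image_sector {a : ℝ} (ha : a ≤ π / 2) :
    {w : ℂ | ∃ t ψ : ℝ, 0 < t ∧ |ψ| < a ∧
        w = (t : ℂ) * exp (2 * ψ * I) + (t : ℂ)⁻¹ * exp (-(2 * ψ) * I)} =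
      (fun z => z + z⁻¹) '' {z | z ≠ 0 ∧ |arg z| < 2 * a} := by
  ext w
  simp only [Set.mem_ofPred_eq, Set.mem_image, neg_mul, mul_exp_add_inv_mul_exp_neg]
  constructor
  · rintro ⟨t, ψ, ht, hψ, rfl⟩
    have harg : arg (t * exp ((2 * ψ : ℝ) * I)) = 2 * ψ := by
      refine arg_ofReal_mul_exp_mul_I ht ⟨?_, ?_⟩ <;> linarith [abs_lt.1 hψ]
    push_cast at harg
    refine ⟨_, ⟨mul_ne_zero (by exact_mod_cast ht.ne') (exp_ne_zero _), ?_⟩, rfl⟩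
    rw [harg, abs_mul, abs_two]
    linarith
  · rintro ⟨z, ⟨hz, harg⟩, rfl⟩
    refine ⟨‖z‖, arg z / 2, norm_pos_iff.2 hz, by rw [abs_div, abs_two]; linarith, ?_⟩
    push_cast
    rw [mul_div_cancel₀ _ two_ne_zero, norm_mul_exp_arg_mul_I]

theorem re_add_inv (z : ℂ) : (z + z⁻¹).re = z.re * (1 + (normSq z)⁻¹) := by
  rw [add_re, inv_re]; ring

theorem im_add_inv (z : ℂ) : (z + z⁻¹).im = z.im * (1 - (normSq z)⁻¹) := by
  rw [add_im, inv_im]; ring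

theorem exists_ne_zero_add_inv_eq (w : ℂ) : ∃ z ≠ 0, z + z⁻¹ = w := by
  obtain ⟨s, hs⟩ := IsAlgClosed.exists_pow_nat_eq (w ^ 2 - 4) two_pos
  have hmul : (w + s) / 2 * ((w - s) / 2) = 1 := by linear_combination (-1 / 4 : ℂ) * hs
  refine ⟨(w + s) / 2, left_ne_zero_of_mul_eq_one hmul, ?_⟩
  rw [inv_eq_of_mul_eq_one_right hmul]
  ring

theorem re_add_inv_pos_iff {z : ℂ} : 0 < (z + z⁻¹).re ↔ 0 < z.re := by
  have hfactor : 0 < 1 + (normSq z)⁻¹ :=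
    add_pos_of_pos_of_nonneg one_pos (inv_nonneg.2 (normSq_nonneg z))
  rw [re_add_inv, mul_pos_iff_of_pos_right hfactor]

theorem image_add_inv_re_pos :
    (fun z : ℂ => z + z⁻¹) '' {z | 0 < z.re} = {w | 0 < w.re} := by
  ext w
  constructor
  · rintro ⟨z, hz, rfl⟩
    exact re_add_inv_pos_iff.2 hz
  · intro hw
    obtain ⟨z, -, rfl⟩ := exists_ne_zero_add_inv_eq w
    exact ⟨z, re_add_inv_pos_iff.1 hw, rfl⟩

theorem image_add_inv_slitPlane :
    (fun z : ℂ => z + z⁻¹) '' slitPlane = {w | w.im = 0 ∧ w.re ≤ -2}ᶜ := by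
  ext w
  simp only [Set.mem_image, Set.mem_compl_iff, Set.mem_ofPred_eq, not_and, not_le]
  constructor
  · rintro ⟨z, hz, rfl⟩ him
    rcases mem_slitPlane_iff.1 hz with hre | hne
    · linarith [re_add_inv_pos_iff.2 hre]
    · -- a real value off the real axis forces `|z| = 1`, where `z + z⁻¹ = 2 Re z`
      have hnorm : normSq z = 1 := by
        have := (mul_eq_zero.1 ((im_add_inv z).symm.trans him)).resolve_left hne
        rwa [sub_eq_zero, eq_comm, inv_eq_one] at this
      have hre : (z + z⁻¹).re = 2 * z.re := by
        rw [re_add_inv, hnorm]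
        ring
      have : 0 < z.im * z.im := mul_self_pos.2 hne
      nlinarith [normSq_apply z]
  · intro hw
    obtain ⟨z, hz, rfl⟩ := exists_ne_zero_add_inv_eq w
    refine ⟨z, ?_, rfl⟩
    by_contra hslit
    rw [mem_slitPlane_iff, not_or, not_lt, not_not] at hslit
    obtain ⟨x, rfl⟩ : ∃ x : ℝ, z = x := ⟨z.re, ext rfl hslit.2⟩
    have hx : x < 0 := lt_of_le_of_ne hslit.1 (by exact_mod_cast hz)
    have hw' := hw (by simp [← ofReal_inv])
    rw [← ofReal_inv, ← ofReal_add, ofReal_re] at hw'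
    linarith [add_inv_le_neg_two hx]

end Complex

/-- Explicit description of the trace images of the domains `X_ℂ(Ω)` and `X_ℂ(2Ω)`:
(a) `{t e^{2iψ} + t⁻¹ e^{-2iψ} : t > 0, |ψ| < π/4} = {Re > 0}`;
(b) `{t e^{2iψ} + t⁻¹ e^{-2iψ} : t > 0, |ψ| < π/2} = ℂ ∖ (-∞, -2]`. -/
theorem trace_image_of_crown_domains :
    ({w : ℂ | ∃ t ψ : ℝ, 0 < t ∧ |ψ| < π / 4 ∧
        w = (t : ℂ) * Complex.exp (2 * ψ * Complex.I) +
          (t : ℂ)⁻¹ * Complex.exp (-(2 * ψ) * Complex.I)} =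
      {w : ℂ | 0 < w.re}) ∧
    ({w : ℂ | ∃ t ψ : ℝ, 0 < t ∧ |ψ| < π / 2 ∧
        w = (t : ℂ) * Complex.exp (2 * ψ * Complex.I) +
          (t : ℂ)⁻¹ * Complex.exp (-(2 * ψ) * Complex.I)} =
      {w : ℂ | w.im = 0 ∧ w.re ≤ -2}ᶜ) := by
  constructor
  · rw [Complex.setOf_polar_add_inv_eq_image_sector (by linarith [pi_pos]),
      show 2 * (π / 4) = π / 2 by ring, Complex.setOf_ne_zero_abs_arg_lt_pi_div_two,
      Complex.image_add_inv_re_pos]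
  · rw [Complex.setOf_polar_add_inv_eq_image_sector le_rfl, mul_div_cancel₀ _ two_ne_zero,
      Complex.setOf_ne_zero_abs_arg_lt_pi, Complex.image_add_inv_slitPlane]
end

section
/- Non-containment of G-orbits through 2Ω∖Ω̄ in X_{ℂ,2Ω}: for every φ ∈ ℝ with π/4 < |φ| < π/2 there exists a continuous map γ : [0,1] → SL(2,ℝ) with γ(0) the identity matrix such that the function σ(s) = trace( γ(s) · diag(e^{2iφ}, e^{−2iφ}) · γ(s)ᵀ ) is real-valued for every s ∈ [0,1], is strictly decreasing on [0,1], takes values in [−2, 2], and satisfies σ(1) = −2. In particular there exists g ∈ SL(2,ℝ) with trace( g · diag(e^{2iφ}, e^{−2iφ}) · gᵀ ) = −2, so the SL(2,ℝ)-orbit of diag(e^{2iφ}, e^{−2iφ}) is not contained in {z ∈ Sym(2,ℂ) : det z = 1, trace z ∉ (−∞, −2]}. -/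
/-!
The hyperbolic rotations `h(a) = [[cosh a, sinh a], [sinh a, cosh a]]` form a one-parameter
subgroup of `SL(2,ℝ)` along which the trace of `h(a)·diag(e^{2iφ}, e^{-2iφ})·h(a)ᵀ` is the real
number `2 cos(2φ) cosh(2a)`. For `π/4 < |φ| < π/2` one has `-1 < cos(2φ) < 0`, so this trace
starts at `2 cos(2φ) ∈ (-2, 0)` and decreases strictly as `a` grows from `0`; it reaches `-2` at
`cosh(2a) = -1/cos(2φ)`.
-/

open Real Matrix

/-- The point `g·diag(e^{2iφ}, e^{-2iφ})·gᵀ` of the `SL(2,ℝ)`-orbit of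
`exp(iφ diag(1,-1))·x₀` in the symmetric-matrix model `X_ℂ = {z ∈ Sym(2,ℂ) : det z = 1}`. -/
noncomputable def orbPt (g : Matrix (Fin 2) (Fin 2) ℝ) (φ : ℝ) : Matrix (Fin 2) (Fin 2) ℂ :=
  (g.map Complex.ofReal) *
    Matrix.diagonal ![Complex.exp (2 * φ * Complex.I), Complex.exp (-(2 * φ) * Complex.I)] *
    (g.map Complex.ofReal)ᵀ

noncomputable def hyperbolicRotation (a : ℝ) : Matrix (Fin 2) (Fin 2) ℝ :=
  !![cosh a, sinh a; sinh a, cosh a]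

lemma hyperbolicRotation_zero : hyperbolicRotation 0 = 1 := by
  simp [hyperbolicRotation, one_fin_two]

lemma det_hyperbolicRotation (a : ℝ) : (hyperbolicRotation a).det = 1 := by
  rw [hyperbolicRotation, det_fin_two_of, ← sq, ← sq, cosh_sq_sub_sinh_sq]

lemma continuous_hyperbolicRotation : Continuous hyperbolicRotation := by
  refine continuous_matrix fun i j => ?_
  fin_cases i <;> fin_cases j <;>
    simp only [hyperbolicRotation, Fin.zero_eta, Fin.mk_one, of_apply, cons_val', cons_val_zero,
      cons_val_one, cons_val_fin_one] <;>
    fun_prop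

lemma trace_orbPt (g : Matrix (Fin 2) (Fin 2) ℝ) (φ : ℝ) :
    trace (orbPt g φ) =
      ((g 0 0 ^ 2 + g 1 0 ^ 2 : ℝ) : ℂ) * Complex.exp (2 * φ * Complex.I)
        + ((g 0 1 ^ 2 + g 1 1 ^ 2 : ℝ) : ℂ) * Complex.exp (-(2 * φ) * Complex.I) := by
  simp only [orbPt, trace_fin_two, mul_apply, Fin.sum_univ_two, diagonal, map_apply, of_apply,
    transpose_apply, mul_ite, mul_zero, Finset.sum_ite_eq', Finset.mem_univ, if_true, cons_val_zero,
    cons_val_one, cons_val_fin_one]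
  push_cast
  ring

lemma trace_orbPt_hyperbolicRotation (a φ : ℝ) :
    trace (orbPt (hyperbolicRotation a) φ) = ((2 * cos (2 * φ) * cosh (2 * a) : ℝ) : ℂ) := by
  simp only [trace_orbPt, hyperbolicRotation, of_apply, cons_val', cons_val_zero, cons_val_one,
    empty_val', cons_val_fin_one]
  rw [Complex.exp_mul_I, Complex.exp_mul_I, cosh_two_mul]
  push_cast [Complex.cos_neg, Complex.sin_neg]
  ring

lemma cos_mem_Ioo_of_pi_div_two_lt_abs {x : ℝ} (h₁ : π / 2 < |x|) (h₂ : |x| < π) :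
    cos x ∈ Set.Ioo (-1) 0 := by
  rw [← cos_abs]
  refine ⟨?_, cos_neg_of_pi_div_two_lt_of_lt h₁ (by linarith [pi_pos])⟩
  simpa only [cos_pi] using cos_lt_cos_of_nonneg_of_le_pi (abs_nonneg x) le_rfl h₂

lemma strictAntiOn_mul_cosh_mul {c T : ℝ} (hc : c < 0) (hT : 0 < T) :
    StrictAntiOn (fun s => c * cosh (T * s)) (Set.Ici 0) := fun s hs t ht hst =>
  mul_lt_mul_of_neg_left
    (cosh_strictMonoOn (mul_nonneg hT.le hs) (mul_nonneg hT.le ht) (by gcongr)) hc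

/-- For `π/4 < |φ| < π/2` the `SL(2,ℝ)`-orbit of `diag(e^{2iφ}, e^{-2iφ})` leaves the domain
`X_{ℂ,2Ω}`: there is a curve in `SL(2,ℝ)` starting at the identity along which the trace is
real, strictly decreasing in `[-2,2]`, reaching `-2`; in particular the orbit meets the cut
and is not contained in `{z ∈ Sym(2,ℂ) : det z = 1, trace z ∉ (-∞,-2]}`. -/
theorem orbit_leaves_XC_two_Omega (φ : ℝ) (h1 : π / 4 < |φ|) (h2 : |φ| < π / 2) :
    (∃ γ : ℝ → Matrix (Fin 2) (Fin 2) ℝ, Continuous γ ∧ γ 0 = 1 ∧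
      (∀ s ∈ Set.Icc (0 : ℝ) 1, (γ s).det = 1) ∧
      (∀ s ∈ Set.Icc (0 : ℝ) 1, (Matrix.trace (orbPt (γ s) φ)).im = 0) ∧
      StrictAntiOn (fun s => (Matrix.trace (orbPt (γ s) φ)).re) (Set.Icc (0 : ℝ) 1) ∧
      (∀ s ∈ Set.Icc (0 : ℝ) 1,
        (Matrix.trace (orbPt (γ s) φ)).re ∈ Set.Icc (-2 : ℝ) 2) ∧
      Matrix.trace (orbPt (γ 1) φ) = -2) ∧
    (∃ g : Matrix.SpecialLinearGroup (Fin 2) ℝ,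
      Matrix.trace (orbPt (g : Matrix (Fin 2) (Fin 2) ℝ) φ) = -2) ∧
    ¬ ({z : Matrix (Fin 2) (Fin 2) ℂ | ∃ g : Matrix.SpecialLinearGroup (Fin 2) ℝ,
          z = orbPt (g : Matrix (Fin 2) (Fin 2) ℝ) φ} ⊆
        {z : Matrix (Fin 2) (Fin 2) ℂ | zᵀ = z ∧ z.det = 1 ∧
          ¬ ((Matrix.trace z).im = 0 ∧ (Matrix.trace z).re ≤ -2)}) := by
  obtain ⟨hc₁, hc₀⟩ := cos_mem_Ioo_of_pi_div_two_lt_abs (x := 2 * φ)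
    (by rw [abs_mul, abs_two]; linarith) (by rw [abs_mul, abs_two]; linarith)
  set c := cos (2 * φ)
  have hc_inv : 1 < -c⁻¹ := by
    rw [← inv_neg, one_lt_inv₀ (by linarith)]
    linarith
  set T := arcosh (-c⁻¹)
  have hcT : c * cosh T = -1 := by
    rw [cosh_arcosh hc_inv.le, mul_neg, mul_inv_cancel₀ hc₀.ne]
  set γ := fun s : ℝ => hyperbolicRotation (T / 2 * s)
  have htr (s : ℝ) : trace (orbPt (γ s) φ) = ((2 * (c * cosh (T * s)) : ℝ) : ℂ) := by
    rw [trace_orbPt_hyperbolicRotation, ← mul_assoc, mul_div_cancel₀ T two_ne_zero, mul_assoc]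
  have hγ₁ : trace (orbPt (γ 1) φ) = -2 := by
    rw [htr, mul_one, hcT]
    norm_num
  have hanti : StrictAntiOn (fun s => c * cosh (T * s)) (Set.Icc 0 1) :=
    (strictAntiOn_mul_cosh_mul hc₀ (arcosh_pos hc_inv)).mono Set.Icc_subset_Ici_self
  have hdet : (γ 1).det = 1 := det_hyperbolicRotation _
  refine ⟨⟨γ, continuous_hyperbolicRotation.comp (by fun_prop),
    by simp [γ, hyperbolicRotation_zero], fun s _ => det_hyperbolicRotation _,
    fun s _ => by rw [htr, Complex.ofReal_im], ?_, ?_, hγ₁⟩,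
    ⟨⟨γ 1, hdet⟩, hγ₁⟩, fun hsub => (hsub ⟨⟨γ 1, hdet⟩, rfl⟩).2.2 (by simp [hγ₁])⟩
  · intro s hs t ht hst
    simpa only [htr, Complex.ofReal_re] using mul_lt_mul_of_pos_left (hanti hs ht hst) two_pos
  · intro s hs
    have hlow := hanti.antitoneOn hs (Set.right_mem_Icc.2 zero_le_one) hs.2
    have hup := hanti.antitoneOn (Set.left_mem_Icc.2 zero_le_one) hs hs.1
    simp only [mul_zero, mul_one, cosh_zero] at hlow hup
    simp only [htr, Complex.ofReal_re, Set.mem_Icc]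
    constructor <;> linarith
end

section
/- Vanishing matrix coefficients imply proper action on H∖{0}: let G be a locally compact, second-countable topological group, H a complex Hilbert space, and π a group homomorphism from G to the group of unitary (complex-linear isometric) automorphisms of H such that for every v ∈ H the orbit map g ↦ π(g)v is continuous. Assume that all matrix coefficients vanish at infinity, i.e. for all v, w ∈ H the function g ↦ ⟨π(g)v, w⟩ tends to 0 along the cocompact filter of G. Then G acts properly on H ∖ {0}: for every compact subset C ⊆ H with 0 ∉ C, the set C_G = {g ∈ G : there exists v ∈ C with π(g)v ∈ C} is compact. -/
open Filter Topology
open scoped InnerProductSpace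

/-! Because each `π(g)` is an isometry, the matrix coefficients `(v, w) ↦ ⟪π(g)v, w⟫` form an
equicontinuous family, so their pointwise convergence to `0` at infinity is uniform on the
compact set `C × C`. Hence, outside some compact `K ⊆ G`, all of them are smaller than
`min_{v ∈ C} ‖v‖²`, which forbids `π(g)v ∈ C` for `v ∈ C` (take `w = π(g)v`). So the return set
lies in `K`; it is closed since the action is jointly continuous and `C` is compact. -/

theorem Equicontinuous.tendstoUniformlyOn_of_tendsto {ι X α : Type*} [TopologicalSpace X]
    [UniformSpace α] {F : ι → X → α} (hF : Equicontinuous F) {f : X → α} {l : Filter ι}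
    (h : ∀ x, Tendsto (fun i => F i x) l (𝓝 (f x))) {K : Set X} (hK : IsCompact K) :
    TendstoUniformlyOn F f l K := by
  have := (EquicontinuousOn.tendsto_uniformOnFun_iff_pi' (𝔖 := {K}) (by simpa using hK)
    (by simpa using hF.equicontinuousOn K) l f).mpr (tendsto_pi_nhds.mpr fun x => h x)
  exact UniformOnFun.tendsto_iff_tendstoUniformlyOn.mp this K rfl

section Inner

variable {ι 𝕜 E F : Type*} [RCLike 𝕜] [SeminormedAddCommGroup E] [InnerProductSpace 𝕜 E]
  [SeminormedAddCommGroup F] [InnerProductSpace 𝕜 F]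

theorem LinearIsometry.norm_inner_apply_sub_le (A : E →ₗᵢ[𝕜] F) (v v' : E) (w w' : F) :
    ‖⟪A v, w⟫_𝕜 - ⟪A v', w'⟫_𝕜‖ ≤ ‖v - v'‖ * ‖w‖ + ‖v'‖ * ‖w - w'‖ := by
  have hsplit : ⟪A v, w⟫_𝕜 - ⟪A v', w'⟫_𝕜 = ⟪A (v - v'), w⟫_𝕜 + ⟪A v', w - w'⟫_𝕜 := by
    rw [map_sub, inner_sub_left, inner_sub_right]; ring
  calc ‖⟪A v, w⟫_𝕜 - ⟪A v', w'⟫_𝕜‖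
      ≤ ‖⟪A (v - v'), w⟫_𝕜‖ + ‖⟪A v', w - w'⟫_𝕜‖ := hsplit ▸ norm_add_le _ _
    _ ≤ ‖A (v - v')‖ * ‖w‖ + ‖A v'‖ * ‖w - w'‖ :=
        add_le_add (norm_inner_le_norm _ _) (norm_inner_le_norm _ _)
    _ = ‖v - v'‖ * ‖w‖ + ‖v'‖ * ‖w - w'‖ := by rw [A.norm_map, A.norm_map]

theorem equicontinuous_inner_linearIsometry_apply (A : ι → E →ₗᵢ[𝕜] F) :
    Equicontinuous fun i (p : E × F) => ⟪A i p.1, p.2⟫_𝕜 := by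
  rintro ⟨v₀, w₀⟩
  refine Metric.equicontinuousAt_of_continuity_modulus
    (fun p : E × F => ‖v₀ - p.1‖ * ‖w₀‖ + ‖p.1‖ * ‖w₀ - p.2‖) ?_ _
    (Eventually.of_forall fun p i => by
      simpa only [dist_eq_norm] using (A i).norm_inner_apply_sub_le v₀ p.1 w₀ p.2)
  have hcont : Continuous fun p : E × F => ‖v₀ - p.1‖ * ‖w₀‖ + ‖p.1‖ * ‖w₀ - p.2‖ := by
    fun_prop
  simpa using hcont.tendsto (v₀, w₀)

theorem tendstoUniformlyOn_inner_linearIsometry_apply (A : ι → E →ₗᵢ[𝕜] F) {l : Filter ι}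
    (h : ∀ v w, Tendsto (fun i => ⟪A i v, w⟫_𝕜) l (𝓝 0)) {K : Set (E × F)} (hK : IsCompact K) :
    TendstoUniformlyOn (fun i (p : E × F) => ⟪A i p.1, p.2⟫_𝕜) 0 l K :=
  (equicontinuous_inner_linearIsometry_apply A).tendstoUniformlyOn_of_tendsto
    (fun p => h p.1 p.2) hK

end Inner

theorem isClosed_setOf_exists_mem_apply_mem {G X Y : Type*} [TopologicalSpace G]
    [TopologicalSpace X] [TopologicalSpace Y] {f : G → X → Y}
    (hf : Continuous fun p : G × X => f p.1 p.2) {C : Set X} (hC : IsCompact C) {D : Set Y}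
    (hD : IsClosed D) : IsClosed {g | ∃ x ∈ C, f g x ∈ D} := by
  have : CompactSpace C := isCompact_iff_compactSpace.mp hC
  have hfst : {g | ∃ x ∈ C, f g x ∈ D} = Prod.fst '' {p : G × C | f p.1 p.2 ∈ D} := by
    ext g; simp
  rw [hfst]
  exact isClosedMap_fst_of_compactSpace _ <| hD.preimage <|
    hf.comp (continuous_fst.prodMk (continuous_subtype_val.comp continuous_snd))

theorem proper_action_of_vanishing_matrix_coefficients_general
    {G : Type*} [Group G] [TopologicalSpace G]
    {H : Type*} [NormedAddCommGroup H] [InnerProductSpace ℂ H]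
    (ρ : G →* (H ≃ₗᵢ[ℂ] H))
    (hcont : ∀ v : H, Continuous fun g => ρ g v)
    (hvanish : ∀ v w : H,
      Tendsto (fun g => (inner ℂ (ρ g v) w : ℂ)) (cocompact G) (nhds 0)) :
    ∀ C : Set H, IsCompact C → (0 : H) ∉ C →
      IsCompact {g : G | ∃ v ∈ C, ρ g v ∈ C} := by
  intro C hC hC0
  obtain ⟨r, hr, hrC⟩ := hC.exists_forall_le' (f := fun v : H => ‖v‖ ^ 2) (by fun_prop)
    fun v hv => pow_pos (norm_pos_iff.mpr (ne_of_mem_of_not_mem hv hC0)) 2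
  have hsmall : ∀ᶠ g in cocompact G, ∀ p ∈ C ×ˢ C, ‖(inner ℂ (ρ g p.1) p.2 : ℂ)‖ < r := by
    simpa only [Pi.zero_apply, dist_zero_left, LinearIsometryEquiv.coe_toLinearIsometry] using
      Metric.tendstoUniformlyOn_iff.mp (tendstoUniformlyOn_inner_linearIsometry_apply (fun g => (ρ g).toLinearIsometry)
        hvanish (hC.prod hC)) r hr
  obtain ⟨K, hK, hKsmall⟩ := mem_cocompact.mp hsmall
  have hjoint : Continuous fun p : G × H => ρ p.1 p.2 :=
    continuous_prod_of_continuous_lipschitzWith' _ 1 (fun g => (ρ g).lipschitz) hcont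
  refine hK.of_isClosed_subset (isClosed_setOf_exists_mem_apply_mem hjoint hC hC.isClosed) ?_
  rintro g ⟨v, hv, hgv⟩
  by_contra hgK
  have hlt := hKsmall hgK (v, ρ g v) ⟨hv, hgv⟩
  rw [inner_self_eq_norm_sq_to_K, norm_pow, RCLike.norm_ofReal, abs_norm] at hlt
  exact (hrC _ hgv).not_gt hlt

/-- Vanishing matrix coefficients imply proper action on `H ∖ {0}`: if all matrix
coefficients of a unitary representation vanish at infinity, then for every compact set
`C ⊆ H` not containing `0`, the set `{g : π(g)C ∩ C ≠ ∅}` is compact. -/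
theorem proper_action_of_vanishing_matrix_coefficients
    {G : Type*} [Group G] [TopologicalSpace G] [IsTopologicalGroup G]
    [LocallyCompactSpace G] [SecondCountableTopology G]
    {H : Type*} [NormedAddCommGroup H] [InnerProductSpace ℂ H] [CompleteSpace H]
    (ρ : G →* (H ≃ₗᵢ[ℂ] H))
    (hcont : ∀ v : H, Continuous fun g => ρ g v)
    (hvanish : ∀ v w : H,
      Tendsto (fun g => (inner ℂ (ρ g v) w : ℂ)) (cocompact G) (nhds 0)) :
    ∀ C : Set H, IsCompact C → (0 : H) ∉ C →
      IsCompact {g : G | ∃ v ∈ C, ρ g v ∈ C} :=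
  proper_action_of_vanishing_matrix_coefficients_general ρ hcont hvanish
end

section
/- Norm growth of the analytically continued K-fixed vector (‖π_λ(a_ε)v_K‖ ≍ √|log ε|): for every λ ∈ ℝ there exist constants 0 < c ≤ C and ε₀ ∈ (0, 1) such that for all ε ∈ (0, ε₀), c·log(1/ε) ≤ ∫_ℝ ‖ (1 + e^{−i(π−4ε)}·x²)^{−(1+iλ)/2} ‖² dx ≤ C·log(1/ε), where the complex power is the principal branch (for 0 < ε < π/4 the base 1 + e^{−i(π−4ε)}x² = 1 − x²cos(4ε) − i·x²sin(4ε) never lies on the cut (−∞, 0]). -/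
open Real MeasureTheory Set

/-!
The integrand is `‖z ^ w‖ ^ 2` with `re w = -1/2`, that is `exp (λ arg z) / ‖z‖`; as `|arg z| ≤ π`,
only `1 / ‖z‖` matters, up to the factors `exp (± π |λ|)`. Up to a unimodular factor,
`z = x² - exp (-4 ε i)`, so `‖z‖` is comparable to `|x² - 1| + 4 ε`: the triangle inequality through
`1` gives `|x² - 1| - 4 ε ≤ ‖z‖ ≤ |x² - 1| + 4 ε`, and `‖z‖ ≥ |sin 4ε| ≥ 2 ε` absorbs the `- 4 ε`.
Finally `∫ (|x² - 1| + θ)⁻¹ dx ≍ log (1 / θ)`: near `x = ± 1` the integrand is comparable to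
`(|x ∓ 1| + θ)⁻¹`, which produces the logarithm, and the tails are bounded by `2 / (1 + x²)`.
-/

lemma integral_inv_add_of_pos {θ r : ℝ} (hθ : 0 < θ) (hr : 0 ≤ r) :
    ∫ u in (0)..r, (u + θ)⁻¹ = log ((r + θ) / θ) := by
  rw [intervalIntegral.integral_comp_add_right (fun u => u⁻¹), zero_add,
    integral_inv_of_pos hθ (by linarith)]

lemma integral_inv_abs_add_of_pos {θ r : ℝ} (hθ : 0 < θ) (hr : 0 ≤ r) :
    ∫ u in (-r)..r, (|u| + θ)⁻¹ = 2 * log ((r + θ) / θ) := by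
  have hcont : Continuous fun u : ℝ => (|u| + θ)⁻¹ := by fun_prop (disch := intro; positivity)
  have hright : ∫ u in (0)..r, (|u| + θ)⁻¹ = log ((r + θ) / θ) := by
    rw [← integral_inv_add_of_pos hθ hr]
    refine intervalIntegral.integral_congr fun u hu => ?_
    rw [uIcc_of_le hr] at hu
    simp only [abs_of_nonneg hu.1]
  have hleft : ∫ u in (-r)..0, (|u| + θ)⁻¹ = ∫ u in (0)..r, (|u| + θ)⁻¹ := by
    simpa using
      (intervalIntegral.integral_comp_neg (fun u : ℝ => (|u| + θ)⁻¹) (a := 0) (b := r)).symm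
  rw [← intervalIntegral.integral_add_adjacent_intervals (hcont.intervalIntegrable _ 0)
    (hcont.intervalIntegrable 0 _), hleft, hright]
  ring

lemma integral_inv_abs_sub_add_of_pos (c : ℝ) {θ r : ℝ} (hθ : 0 < θ) (hr : 0 ≤ r) :
    ∫ x in (c - r)..(c + r), (|x - c| + θ)⁻¹ = 2 * log ((r + θ) / θ) := by
  rw [intervalIntegral.integral_comp_sub_right (fun u => (|u| + θ)⁻¹), sub_sub_cancel_left,
    add_sub_cancel_left, integral_inv_abs_add_of_pos hθ hr]

lemma abs_sq_sub_one_eq (x : ℝ) : |x ^ 2 - 1| = |x - 1| * |x + 1| := by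
  rw [← abs_mul]; ring_nf

lemma inv_abs_sq_sub_one_add_le {θ : ℝ} (hθ : 0 < θ) (x : ℝ) :
    (|x ^ 2 - 1| + θ)⁻¹ ≤ 2 * (1 + x ^ 2)⁻¹ + (Icc 0 2).indicator (fun x => (|x - 1| + θ)⁻¹) x
      + (Icc (-2) 0).indicator (fun x => (|x + 1| + θ)⁻¹) x := by
  have h₁ : 0 ≤ 2 * (1 + x ^ 2)⁻¹ := by positivity
  have h₂ : 0 ≤ (Icc 0 2).indicator (fun x => (|x - 1| + θ)⁻¹) x :=
    indicator_nonneg (fun _ _ => by positivity) x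
  have h₃ : 0 ≤ (Icc (-2) 0).indicator (fun x => (|x + 1| + θ)⁻¹) x :=
    indicator_nonneg (fun _ _ => by positivity) x
  by_cases hp : x ∈ Icc 0 2
  · have : |x - 1| ≤ |x ^ 2 - 1| := by
      rw [abs_sq_sub_one_eq]
      exact le_mul_of_one_le_right (abs_nonneg _) (by rw [abs_of_nonneg] <;> linarith [hp.1])
    rw [indicator_of_mem hp]
    have : (|x ^ 2 - 1| + θ)⁻¹ ≤ (|x - 1| + θ)⁻¹ := by gcongr
    linarith
  by_cases hm : x ∈ Icc (-2) 0
  · have : |x + 1| ≤ |x ^ 2 - 1| := by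
      rw [abs_sq_sub_one_eq]
      exact le_mul_of_one_le_left (abs_nonneg _) (by rw [abs_of_nonpos] <;> linarith [hm.2])
    rw [indicator_of_mem hm]
    have : (|x ^ 2 - 1| + θ)⁻¹ ≤ (|x + 1| + θ)⁻¹ := by gcongr
    linarith
  have hx : 4 < x ^ 2 := by
    simp only [mem_Icc, not_and_or, not_le] at hp hm
    rcases hp with hp | hp <;> rcases hm with hm | hm <;> nlinarith
  have : (|x ^ 2 - 1| + θ)⁻¹ ≤ ((1 + x ^ 2) / 2)⁻¹ := by
    gcongr
    rw [abs_of_pos (by linarith)]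
    linarith
  rw [inv_div] at this
  linarith [show 2 / (1 + x ^ 2) = 2 * (1 + x ^ 2)⁻¹ from div_eq_mul_inv _ _]

lemma continuous_inv_abs_sub_add (c : ℝ) {θ : ℝ} (hθ : 0 < θ) :
    Continuous fun x : ℝ => (|x - c| + θ)⁻¹ := by
  fun_prop (disch := intro; positivity)

lemma integral_indicator_Icc_inv_abs_sub_add (c : ℝ) {θ : ℝ} (hθ : 0 < θ) :
    ∫ x, (Icc (c - 1) (c + 1)).indicator (fun x => (|x - c| + θ)⁻¹) x
      = 2 * log ((1 + θ) / θ) := by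
  rw [integral_indicator measurableSet_Icc, integral_Icc_eq_integral_Ioc,
    ← intervalIntegral.integral_of_le (by linarith),
    integral_inv_abs_sub_add_of_pos c hθ zero_le_one]

lemma integrable_indicator_Icc_inv_abs_sub_add (c a b : ℝ) {θ : ℝ} (hθ : 0 < θ) :
    Integrable ((Icc a b).indicator fun x => (|x - c| + θ)⁻¹) :=
  (continuous_inv_abs_sub_add c hθ).continuousOn.integrableOn_Icc.integrable_indicator
    measurableSet_Icc

lemma integrable_inv_abs_sq_sub_one_add {θ : ℝ} (hθ : 0 < θ) :
    Integrable fun x : ℝ => (|x ^ 2 - 1| + θ)⁻¹ := by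
  have hmaj := ((integrable_inv_one_add_sq.const_mul 2).add
    (integrable_indicator_Icc_inv_abs_sub_add 1 0 2 hθ)).add
    (integrable_indicator_Icc_inv_abs_sub_add (-1) (-2) 0 hθ)
  refine hmaj.mono' (by fun_prop (disch := intro; positivity)) (ae_of_all _ fun x => ?_)
  rw [norm_of_nonneg (by positivity)]
  simpa using inv_abs_sq_sub_one_add_le hθ x

lemma integral_inv_abs_sq_sub_one_add_le {θ : ℝ} (hθ : 0 < θ) :
    ∫ x, (|x ^ 2 - 1| + θ)⁻¹ ≤ 2 * π + 4 * log ((1 + θ) / θ) := by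
  have hp := integrable_indicator_Icc_inv_abs_sub_add 1 (1 - 1) (1 + 1) hθ
  have hm := integrable_indicator_Icc_inv_abs_sub_add (-1) (-1 - 1) (-1 + 1) hθ
  have hq := integrable_inv_one_add_sq.const_mul 2
  calc ∫ x, (|x ^ 2 - 1| + θ)⁻¹
      ≤ ∫ x, (2 * (1 + x ^ 2)⁻¹
          + (Icc (1 - 1) (1 + 1)).indicator (fun x => (|x - 1| + θ)⁻¹) x
          + (Icc (-1 - 1) (-1 + 1)).indicator (fun x => (|x - -1| + θ)⁻¹) x) :=
        integral_mono (integrable_inv_abs_sq_sub_one_add hθ) ((hq.add hp).add hm) fun x => by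
          norm_num
          simpa using inv_abs_sq_sub_one_add_le hθ x
    _ = 2 * π + 4 * log ((1 + θ) / θ) := by
        rw [integral_add (by exact hq.add hp) hm, integral_add hq hp, integral_const_mul,
          integral_univ_inv_one_add_sq, integral_indicator_Icc_inv_abs_sub_add 1 hθ,
          integral_indicator_Icc_inv_abs_sub_add (-1) hθ]
        ring

lemma log_le_integral_inv_abs_sq_sub_one_add {θ : ℝ} (hθ : 0 < θ) :
    2 / 3 * log ((1 + θ) / θ) ≤ ∫ x, (|x ^ 2 - 1| + θ)⁻¹ := by
  have hg := continuous_inv_abs_sub_add 1 hθ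
  calc 2 / 3 * log ((1 + θ) / θ) = ∫ x in (1 - 1)..(1 + 1), 3⁻¹ * (|x - 1| + θ)⁻¹ := by
        rw [intervalIntegral.integral_const_mul, integral_inv_abs_sub_add_of_pos 1 hθ zero_le_one]
        ring
    _ ≤ ∫ x in (1 - 1)..(1 + 1), (|x ^ 2 - 1| + θ)⁻¹ := by
        refine intervalIntegral.integral_mono_on (by norm_num)
          ((hg.intervalIntegrable _ _).const_mul _)
          ((integrable_inv_abs_sq_sub_one_add hθ).intervalIntegrable) fun x hx => ?_
        have hx : 0 ≤ x ∧ x ≤ 2 := by norm_num at hx; exact hx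
        have : |x ^ 2 - 1| + θ ≤ 3 * (|x - 1| + θ) := by
          rw [abs_sq_sub_one_eq, abs_of_nonneg (by linarith : 0 ≤ x + 1)]
          nlinarith [abs_nonneg (x - 1)]
        rw [← mul_inv]
        gcongr
    _ ≤ ∫ x, (|x ^ 2 - 1| + θ)⁻¹ := by
        rw [intervalIntegral.integral_of_le (by norm_num)]
        exact setIntegral_le_integral (integrable_inv_abs_sq_sub_one_add hθ)
          (ae_of_all _ fun x => by positivity)

lemma norm_ofReal_sub_exp_le (t φ : ℝ) :
    ‖(t : ℂ) - Complex.exp (φ * Complex.I)‖ ≤ |t - 1| + |φ| := by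
  calc ‖(t : ℂ) - Complex.exp (φ * Complex.I)‖
      = ‖((t - 1 : ℝ) : ℂ) - (Complex.exp (Complex.I * φ) - 1)‖ := by push_cast; ring_nf
    _ ≤ ‖((t - 1 : ℝ) : ℂ)‖ + ‖Complex.exp (Complex.I * φ) - 1‖ := norm_sub_le _ _
    _ ≤ |t - 1| + |φ| := by
        rw [Complex.norm_real, Real.norm_eq_abs, ← Real.norm_eq_abs φ]
        gcongr
        exact Real.norm_exp_I_mul_ofReal_sub_one_le

lemma abs_sub_one_sub_le_norm_ofReal_sub_exp (t φ : ℝ) :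
    |t - 1| - |φ| ≤ ‖(t : ℂ) - Complex.exp (φ * Complex.I)‖ := by
  have h : |t - 1| ≤ ‖(t : ℂ) - Complex.exp (φ * Complex.I)‖ + |φ| :=
    calc |t - 1|
        = ‖((t : ℂ) - Complex.exp (φ * Complex.I)) + (Complex.exp (Complex.I * φ) - 1)‖ := by
          rw [← Real.norm_eq_abs, ← Complex.norm_real]; push_cast; ring_nf
      _ ≤ ‖(t : ℂ) - Complex.exp (φ * Complex.I)‖ + ‖Complex.exp (Complex.I * φ) - 1‖ :=
          norm_add_le _ _
      _ ≤ ‖(t : ℂ) - Complex.exp (φ * Complex.I)‖ + |φ| := by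
          rw [← Real.norm_eq_abs φ]
          gcongr
          exact Real.norm_exp_I_mul_ofReal_sub_one_le
  linarith

lemma abs_sin_le_norm_ofReal_sub_exp (t φ : ℝ) :
    |sin φ| ≤ ‖(t : ℂ) - Complex.exp (φ * Complex.I)‖ := by
  simpa [Complex.exp_ofReal_mul_I_im] using
    Complex.abs_im_le_norm ((t : ℂ) - Complex.exp (φ * Complex.I))

lemma abs_sub_one_add_le_five_mul_norm_ofReal_sub_exp (t : ℝ) {φ : ℝ} (hφ : |φ| ≤ π / 2) :
    |t - 1| + |φ| ≤ 5 * ‖(t : ℂ) - Complex.exp (φ * Complex.I)‖ := by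
  have hsin : |φ| / 2 ≤ |sin φ| := by
    rw [abs_sin_eq_sin_abs_of_abs_le_pi (by linarith [pi_pos])]
    have := mul_le_sin (abs_nonneg φ) hφ
    have : 1 / 2 ≤ 2 / π := by rw [div_le_div_iff₀ two_pos pi_pos]; linarith [pi_le_four]
    nlinarith [abs_nonneg φ]
  linarith [abs_sin_le_norm_ofReal_sub_exp t φ, abs_sub_one_sub_le_norm_ofReal_sub_exp t φ]

lemma norm_one_add_exp_mul_sq (ε x : ℝ) :
    ‖1 + Complex.exp (-((π - 4 * ε : ℝ) : ℂ) * Complex.I) * (x : ℂ) ^ 2‖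
      = ‖((x ^ 2 : ℝ) : ℂ) - Complex.exp ((-(4 * ε) : ℝ) * Complex.I)‖ := by
  have hrot : Complex.exp (-((π - 4 * ε : ℝ) : ℂ) * Complex.I)
      = -Complex.exp ((4 * ε : ℝ) * Complex.I) := by
    rw [show -((π - 4 * ε : ℝ) : ℂ) * Complex.I = (4 * ε : ℝ) * Complex.I - π * Complex.I by
      push_cast; ring, Complex.exp_sub, Complex.exp_pi_mul_I, div_neg, div_one]
  have hinv :
      Complex.exp ((4 * ε : ℝ) * Complex.I) * Complex.exp ((-(4 * ε) : ℝ) * Complex.I) = 1 := by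
    rw [← Complex.exp_add]; push_cast; ring_nf; exact Complex.exp_zero
  have hfac : 1 + Complex.exp (-((π - 4 * ε : ℝ) : ℂ) * Complex.I) * (x : ℂ) ^ 2
      = -Complex.exp ((4 * ε : ℝ) * Complex.I)
          * (((x ^ 2 : ℝ) : ℂ) - Complex.exp ((-(4 * ε) : ℝ) * Complex.I)) := by
    rw [hrot, Complex.ofReal_pow]; linear_combination (-1 : ℂ) * hinv
  rw [hfac, norm_mul, norm_neg, Complex.norm_exp_ofReal_mul_I, one_mul]

lemma norm_cpow_neg_one_add_I_mul_div_two_sq (z : ℂ) (lam : ℝ) :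
    ‖z ^ (-((1 : ℂ) + Complex.I * lam) / 2)‖ ^ 2 = exp (lam * Complex.arg z) * ‖z‖⁻¹ := by
  have hre : (-((1 : ℂ) + Complex.I * lam) / 2).re = -(1 / 2) := by simp; ring
  have him : (-((1 : ℂ) + Complex.I * lam) / 2).im = -(lam / 2) := by simp [neg_div]
  rw [Complex.norm_cpow_of_imp (by simp), hre, him, div_pow, ← rpow_natCast,
    ← rpow_mul (norm_nonneg z), ← exp_nat_mul]
  rw [show -(1 / 2) * ((2 : ℕ) : ℝ) = -1 by norm_num, rpow_neg_one,
    show ((2 : ℕ) : ℝ) * (Complex.arg z * -(lam / 2)) = -(lam * Complex.arg z) by push_cast; ring,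
    exp_neg, div_inv_eq_mul, mul_comm]

lemma abs_mul_arg_le (z : ℂ) (lam : ℝ) : |lam * Complex.arg z| ≤ π * |lam| := by
  rw [abs_mul, mul_comm π]
  exact mul_le_mul_of_nonneg_left (Complex.abs_arg_le_pi z) (abs_nonneg lam)

lemma exp_neg_mul_inv_norm_le_norm_cpow_sq (z : ℂ) (lam : ℝ) :
    exp (-(π * |lam|)) * ‖z‖⁻¹ ≤ ‖z ^ (-((1 : ℂ) + Complex.I * lam) / 2)‖ ^ 2 := by
  rw [norm_cpow_neg_one_add_I_mul_div_two_sq]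
  gcongr
  exact (abs_le.mp (abs_mul_arg_le z lam)).1

lemma norm_cpow_sq_le_exp_mul_inv_norm (z : ℂ) (lam : ℝ) :
    ‖z ^ (-((1 : ℂ) + Complex.I * lam) / 2)‖ ^ 2 ≤ exp (π * |lam|) * ‖z‖⁻¹ := by
  rw [norm_cpow_neg_one_add_I_mul_div_two_sq]
  exact mul_le_mul_of_nonneg_right (exp_le_exp.mpr (abs_le.mp (abs_mul_arg_le z lam)).2)
    (inv_nonneg.mpr (norm_nonneg z))

noncomputable def continuedDensity (lam ε x : ℝ) : ℝ :=
  ‖((1 + Complex.exp (-((π - 4 * ε : ℝ) : ℂ) * Complex.I) * (x : ℂ) ^ 2) ^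
    (-((1 : ℂ) + Complex.I * lam) / 2) : ℂ)‖ ^ 2

lemma norm_one_add_exp_mul_sq_bounds {ε : ℝ} (hε : 0 < ε) (hεπ : 4 * ε ≤ π / 2) (x : ℝ) :
    ‖1 + Complex.exp (-((π - 4 * ε : ℝ) : ℂ) * Complex.I) * (x : ℂ) ^ 2‖ ≤ |x ^ 2 - 1| + 4 * ε ∧
      |x ^ 2 - 1| + 4 * ε
        ≤ 5 * ‖1 + Complex.exp (-((π - 4 * ε : ℝ) : ℂ) * Complex.I) * (x : ℂ) ^ 2‖ := by
  have habs : |-(4 * ε)| = 4 * ε := by rw [abs_neg, abs_of_pos (by linarith)]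
  have hle := norm_ofReal_sub_exp_le (x ^ 2) (-(4 * ε))
  have hge := abs_sub_one_add_le_five_mul_norm_ofReal_sub_exp (x ^ 2) (habs.symm ▸ hεπ)
  rw [habs] at hle hge
  rw [norm_one_add_exp_mul_sq]
  exact ⟨hle, hge⟩

lemma le_continuedDensity (lam : ℝ) {ε : ℝ} (hε : 0 < ε) (hεπ : 4 * ε ≤ π / 2) (x : ℝ) :
    exp (-(π * |lam|)) * (|x ^ 2 - 1| + 4 * ε)⁻¹ ≤ continuedDensity lam ε x := by
  obtain ⟨hle, hge⟩ := norm_one_add_exp_mul_sq_bounds hε hεπ x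
  refine le_trans ?_ (exp_neg_mul_inv_norm_le_norm_cpow_sq _ lam)
  have : 0 < |x ^ 2 - 1| + 4 * ε := by positivity
  gcongr
  linarith

lemma continuedDensity_le (lam : ℝ) {ε : ℝ} (hε : 0 < ε) (hεπ : 4 * ε ≤ π / 2) (x : ℝ) :
    continuedDensity lam ε x ≤ 5 * exp (π * |lam|) * (|x ^ 2 - 1| + 4 * ε)⁻¹ := by
  obtain ⟨-, hge⟩ := norm_one_add_exp_mul_sq_bounds hε hεπ x
  refine (norm_cpow_sq_le_exp_mul_inv_norm _ lam).trans ?_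
  have : 0 < |x ^ 2 - 1| + 4 * ε := by positivity
  calc exp (π * |lam|)
        * ‖1 + Complex.exp (-((π - 4 * ε : ℝ) : ℂ) * Complex.I) * (x : ℂ) ^ 2‖⁻¹
      ≤ exp (π * |lam|) * ((|x ^ 2 - 1| + 4 * ε) / 5)⁻¹ := by gcongr; linarith
    _ = 5 * exp (π * |lam|) * (|x ^ 2 - 1| + 4 * ε)⁻¹ := by rw [inv_div]; ring

lemma integrable_continuedDensity (lam : ℝ) {ε : ℝ} (hε : 0 < ε) (hεπ : 4 * ε ≤ π / 2) :
    Integrable (continuedDensity lam ε) := by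
  have hmeas : Measurable (continuedDensity lam ε) := by unfold continuedDensity; fun_prop
  exact ((integrable_inv_abs_sq_sub_one_add (by positivity : 0 < 4 * ε)).const_mul _).mono'
    hmeas.aestronglyMeasurable (ae_of_all _ fun x => by
      rw [norm_of_nonneg (by unfold continuedDensity; positivity)]
      exact continuedDensity_le lam hε hεπ x)

lemma log_inv_le_two_mul_log_one_add_div {ε : ℝ} (hε : 0 < ε) (hε' : ε ≤ 1 / 16) :
    log (1 / ε) ≤ 2 * log ((1 + 4 * ε) / (4 * ε)) := by
  have h16 : log 16 ≤ log (1 / ε) := log_le_log (by norm_num) (by rw [le_div_iff₀ hε]; linarith)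
  have h4 : log (1 / ε) - log 4 ≤ log ((1 + 4 * ε) / (4 * ε)) := by
    rw [← log_div (by positivity) (by norm_num)]
    exact log_le_log (by positivity) (by rw [div_div, mul_comm]; gcongr; linarith)
  have : log 16 = 2 * log 4 := by rw [show (16 : ℝ) = 4 ^ 2 by norm_num, log_pow]; norm_num
  linarith

lemma log_one_add_div_le_log_inv {ε : ℝ} (hε : 0 < ε) (hε' : ε ≤ 3 / 4) :
    log ((1 + 4 * ε) / (4 * ε)) ≤ log (1 / ε) :=
  log_le_log (by positivity) (by rw [div_le_div_iff₀ (by positivity) hε]; nlinarith)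

lemma one_le_log_inv {ε : ℝ} (hε : 0 < ε) (hε' : ε ≤ 1 / 16) : 1 ≤ log (1 / ε) := by
  rw [le_log_iff_exp_le (by positivity), le_div_iff₀ hε]
  nlinarith [exp_one_lt_d9, exp_pos 1]

/-- Norm growth of the analytically continued `K`-fixed vector:
`‖π_λ(a_ε)v_K‖² ≍ |log ε|` as `ε → 0⁺`. -/
theorem norm_growth_of_continued_K_fixed_vector (lam : ℝ) :
    ∃ c C ε₀ : ℝ, 0 < c ∧ c ≤ C ∧ ε₀ ∈ Set.Ioo (0 : ℝ) 1 ∧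
      ∀ ε ∈ Set.Ioo (0 : ℝ) ε₀,
        c * Real.log (1 / ε) ≤
            (∫ x : ℝ,
              ‖((1 + Complex.exp (-((π - 4 * ε : ℝ) : ℂ) * Complex.I) * (x : ℂ) ^ 2) ^
                  (-((1 : ℂ) + Complex.I * lam) / 2) : ℂ)‖ ^ 2) ∧
          (∫ x : ℝ,
              ‖((1 + Complex.exp (-((π - 4 * ε : ℝ) : ℂ) * Complex.I) * (x : ℂ) ^ 2) ^
                  (-((1 : ℂ) + Complex.I * lam) / 2) : ℂ)‖ ^ 2) ≤
            C * Real.log (1 / ε) := by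
  set K := exp (π * |lam|)
  have hK : 1 ≤ K := one_le_exp (by positivity)
  refine ⟨K⁻¹ / 3, 55 * K, 1 / 16, by positivity, ?_, by norm_num, ?_⟩
  · linarith [inv_le_one_of_one_le₀ hK]
  rintro ε ⟨hε, hε₀⟩
  have hεπ : 4 * ε ≤ π / 2 := by linarith [pi_gt_three]
  have hθ : 0 < 4 * ε := by positivity
  have hg := integrable_inv_abs_sq_sub_one_add hθ
  have hf := integrable_continuedDensity lam hε hεπ
  have hL := log_inv_le_two_mul_log_one_add_div hε hε₀.le
  have hL' := log_one_add_div_le_log_inv hε (by linarith)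
  constructor
  · calc K⁻¹ / 3 * log (1 / ε) ≤ K⁻¹ * (2 / 3 * log ((1 + 4 * ε) / (4 * ε))) := by
          rw [div_mul_eq_mul_div, mul_div_assoc]; gcongr; linarith
      _ ≤ K⁻¹ * ∫ x, (|x ^ 2 - 1| + 4 * ε)⁻¹ := by
          gcongr; exact log_le_integral_inv_abs_sq_sub_one_add hθ
      _ = ∫ x, exp (-(π * |lam|)) * (|x ^ 2 - 1| + 4 * ε)⁻¹ := by
          rw [integral_const_mul, exp_neg]
      _ ≤ ∫ x, continuedDensity lam ε x :=
          integral_mono (hg.const_mul _) hf (le_continuedDensity lam hε hεπ)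
  · calc ∫ x, continuedDensity lam ε x ≤ ∫ x, 5 * K * (|x ^ 2 - 1| + 4 * ε)⁻¹ :=
          integral_mono hf (hg.const_mul _) (continuedDensity_le lam hε hεπ)
      _ ≤ 5 * K * (2 * π + 4 * log ((1 + 4 * ε) / (4 * ε))) := by
          rw [integral_const_mul]; gcongr; exact integral_inv_abs_sq_sub_one_add_le hθ
      _ ≤ 55 * K * log (1 / ε) := by
          nlinarith [pi_lt_d2, one_le_log_inv hε hε₀.le]
end

section
/- Structure of the preimages of the domains Ξ⁺ and Ξ⁻ (Ξ^±K_ℂ = G·K_ℂ·P^±): (a) the set {g ∈ SL(2,ℂ) : g₁₀·i + g₁₁ ≠ 0 and Im((g₀₀·i + g₀₁)/(g₁₀·i + g₁₁)) > 0} equals the product set {u·k·p : u ∈ SL(2,ℝ), k ∈ SO(2,ℂ), p ∈ P⁺}; (b) the set {g ∈ SL(2,ℂ) : g₁₀·(−i) + g₁₁ ≠ 0 and Im((g₀₀·(−i) + g₀₁)/(g₁₀·(−i) + g₁₁)) < 0} equals {u·k·p : u ∈ SL(2,ℝ), k ∈ SO(2,ℂ), p ∈ P⁻}. -/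
/-!
`SL(2,ℂ)` acts linearly on `ℂ²`, and for `j = ±i` the conditions on `g` say that
`g (j, 1) = c (w, 1)` with `c ≠ 0` and `w` in the half-plane of `j`. Real matrices preserve
that half-plane and act transitively on it, so after splitting off a factor from `SL(2,ℝ)` the
vector `(j, 1)` becomes an eigenvector. Complex rotations `!![a, b; -b, a]` have `(j, 1)` as an
eigenvector with eigenvalue `a - b j`, which takes every nonzero value, and the stabilizer of the
vector `(j, 1)` is exactly `P^±`.
-/

open Matrix Complex
open scoped MatrixGroups

theorem Complex.re_eq_zero_and_im_sq_of_sq_eq_neg_one {j : ℂ} (hj : j ^ 2 = -1) :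
    j.re = 0 ∧ j.im ^ 2 = 1 := by
  have hre := congrArg re hj
  have him := congrArg im hj
  simp only [sq, mul_re, mul_im, neg_re, neg_im, one_re, one_im] at hre him
  have hre0 : j.re = 0 := by
    rcases mul_eq_zero.1 (show j.re * j.im = 0 by linarith) with h | h
    · exact h
    · nlinarith [sq_nonneg j.re]
  exact ⟨hre0, by rw [hre0] at hre; linarith⟩

namespace Matrix.SpecialLinearGroup

section Field

variable {K : Type*} [Field K] {j : K}

theorem smul_vec2 (g : SL(2, K)) (x y : K) :
    g • ![x, y] = ![g 0 0 * x + g 0 1 * y, g 1 0 * x + g 1 1 * y] := by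
  change (g : Matrix (Fin 2) (Fin 2) K) *ᵥ ![x, y] = _
  ext i; fin_cases i <;> simp [mulVec, dotProduct]

theorem exists_smul_eq_smul_of_mul_transpose_eq_one (hj : j ^ 2 = -1) (k : SL(2, K))
    (hk : (k : Matrix (Fin 2) (Fin 2) K) * (k : Matrix (Fin 2) (Fin 2) K)ᵀ = 1) :
    ∃ δ : K, δ ≠ 0 ∧ k • ![j, 1] = δ • ![j, 1] := by
  have hdet : k 0 0 * k 1 1 - k 0 1 * k 1 0 = 1 := by rw [← det_fin_two]; exact k.2
  have h00 : k 0 0 ^ 2 + k 0 1 ^ 2 = 1 := by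
    simpa [sq, mul_apply, Fin.sum_univ_two] using congrFun (congrFun hk 0) 0
  have h01 : k 0 0 * k 1 0 + k 0 1 * k 1 1 = 0 := by
    simpa [mul_apply, Fin.sum_univ_two] using congrFun (congrFun hk 0) 1
  have h11 : k 1 1 = k 0 0 := by
    linear_combination k 0 0 * hdet + k 0 1 * h01 - k 1 1 * h00
  have h10 : k 1 0 = -k 0 1 := by
    linear_combination k 0 0 * h01 - k 1 0 * h00 - k 0 1 * hdet
  refine ⟨k 0 0 - k 0 1 * j, left_ne_zero_of_mul_eq_one (b := k 0 0 + k 0 1 * j) ?_, ?_⟩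
  · linear_combination h00 - k 0 1 ^ 2 * hj
  · simp only [smul_vec2, smul_cons, smul_eq_mul, smul_empty, vecCons_inj, mul_one, and_true,
      h10, h11]
    constructor
    · linear_combination k 0 1 * hj
    · ring

theorem exists_mul_transpose_eq_one_smul_eq [NeZero (2 : K)] (hj : j ^ 2 = -1) {δ : K}
    (hδ : δ ≠ 0) :
    ∃ k : SL(2, K), (k : Matrix (Fin 2) (Fin 2) K) * (k : Matrix (Fin 2) (Fin 2) K)ᵀ = 1 ∧
      k • ![j, 1] = δ • ![j, 1] := by
  -- `a - b j = δ` and `a + b j = δ⁻¹`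
  set a := (δ + δ⁻¹) / 2
  set b := j * (δ - δ⁻¹) / 2
  have hab : a ^ 2 + b ^ 2 = 1 := by
    simp only [a, b]; field_simp; linear_combination (δ ^ 2 - 1) ^ 2 * hj
  have hdet : det !![a, b; -b, a] = 1 := by rw [det_fin_two_of]; linear_combination hab
  set k : SL(2, K) := ⟨!![a, b; -b, a], hdet⟩
  have hk : (k : Matrix (Fin 2) (Fin 2) K) = !![a, b; -b, a] := rfl
  refine ⟨k, ?_, ?_⟩
  · ext i l; fin_cases i <;> fin_cases l <;> simp [hk, mul_apply, Fin.sum_univ_two] <;>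
      first | linear_combination hab | ring1
  · simp only [smul_vec2, hk, of_apply, cons_val', cons_val_zero, cons_val_one, cons_val_fin_one,
      smul_cons, smul_eq_mul, smul_empty, vecCons_inj, mul_one, and_true]
    constructor
    · simp only [a, b]; field_simp; ring
    · simp only [a, b]; field_simp; linear_combination (1 - δ ^ 2) * hj

theorem exists_eq_parabolic_iff_smul_eq (hj : j ^ 2 = -1) (p : SL(2, K)) :
    (∃ z : K, (p : Matrix (Fin 2) (Fin 2) K) = !![1 + z, -(j * z); -(j * z), 1 - z]) ↔
      p • ![j, 1] = ![j, 1] := by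
  simp only [smul_vec2, vecCons_inj, mul_one, and_true]
  constructor
  · rintro ⟨z, hz⟩
    simp only [hz, of_apply, cons_val', cons_val_zero, cons_val_one, cons_val_fin_one]
    constructor
    · ring
    · linear_combination (-z) * hj
  · rintro ⟨h0, h1⟩
    have hdet : p 0 0 * p 1 1 - p 0 1 * p 1 0 = 1 := by rw [← det_fin_two]; exact p.2
    have h10 : p 1 0 = -(j * (p 0 0 - 1)) := by
      linear_combination p 1 0 * hj + j * hdet - j * p 0 0 * h1 + j * p 1 0 * h0
    refine ⟨p 0 0 - 1, (eta_fin_two _).trans ?_⟩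
    simp only [EmbeddingLike.apply_eq_iff_eq, vecCons_inj, and_true]
    refine ⟨⟨by ring, by linear_combination h0⟩, h10, ?_⟩
    linear_combination h1 - j * h10 + (p 0 0 - 1) * hj

end Field

variable {j : ℂ}

/-- `g • j` lies in the half-plane of `j`, with `g • j = w` read in homogeneous coordinates. -/
def MapsIntoHalfPlane (j : ℂ) (g : SL(2, ℂ)) : Prop :=
  ∃ c : ℂ, c ≠ 0 ∧ ∃ w : ℂ, 0 < w.im * j.im ∧ g • ![j, 1] = c • ![w, 1]

theorem mapsIntoHalfPlane_iff (g : SL(2, ℂ)) :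
    MapsIntoHalfPlane j g ↔ g 1 0 * j + g 1 1 ≠ 0 ∧
      0 < ((g 0 0 * j + g 0 1) / (g 1 0 * j + g 1 1)).im * j.im := by
  simp only [MapsIntoHalfPlane, smul_vec2, smul_cons, smul_eq_mul, smul_empty, vecCons_inj,
    mul_one, and_true]
  constructor
  · rintro ⟨c, hc, w, hw, hnum, hden⟩
    rw [hnum, hden, mul_div_cancel_left₀ w hc]
    exact ⟨hc, hw⟩
  · rintro ⟨hden, hw⟩
    exact ⟨_, hden, _, hw, (mul_div_cancel₀ _ hden).symm, rfl⟩

theorem map_ofReal_apply (u : SL(2, ℝ)) (i l : Fin 2) : map ofRealHom u i l = (u i l : ℂ) :=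
  rfl

theorem mapsIntoHalfPlane_map_ofReal (hj : j ^ 2 = -1) (u : SL(2, ℝ)) :
    MapsIntoHalfPlane j (map ofRealHom u) := by
  obtain ⟨hre, him⟩ := re_eq_zero_and_im_sq_of_sq_eq_neg_one hj
  have hdet : u 0 0 * u 1 1 - u 0 1 * u 1 0 = 1 := by rw [← det_fin_two]; exact u.2
  rw [mapsIntoHalfPlane_iff]
  simp only [map_ofReal_apply]
  have hjim : j.im ≠ 0 := by rintro h; simp [h] at him
  have hden : (u 1 0 : ℂ) * j + u 1 1 ≠ 0 := by
    intro h
    have h1 : u 1 1 = 0 := by simpa [hre] using congrArg re h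
    have h0 : u 1 0 = 0 := by simpa [hjim] using congrArg im h
    simp [h0, h1] at hdet
  refine ⟨hden, ?_⟩
  rw [div_im, ← sub_div, div_mul_eq_mul_div]
  refine div_pos ?_ (normSq_pos.2 hden)
  simp only [add_re, add_im, mul_re, mul_im, ofReal_re, ofReal_im, hre]
  convert zero_lt_one' ℝ using 1
  linear_combination j.im ^ 2 * hdet + him

theorem exists_map_ofReal_smul_eq (hj : j ^ 2 = -1) {w : ℂ} (hw : 0 < w.im * j.im) :
    ∃ u : SL(2, ℝ), ∃ c : ℂ, c ≠ 0 ∧ map ofRealHom u • ![j, 1] = c • ![w, 1] := by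
  obtain ⟨hre, him⟩ := re_eq_zero_and_im_sq_of_sq_eq_neg_one hj
  set s := √(w.im * j.im)
  have hs : s ≠ 0 := (Real.sqrt_pos.2 hw).ne'
  have hs2 : s ^ 2 = w.im * j.im := Real.sq_sqrt hw.le
  have hw' : w = w.re + (s : ℂ) ^ 2 * j := by
    rw [← ofReal_pow]
    apply Complex.ext
    · simp only [add_re, ofReal_re, re_ofReal_mul, hre, mul_zero, add_zero]
    · simp only [add_im, ofReal_im, im_ofReal_mul, zero_add, hs2]
      linear_combination (-w.im) * him
  have hdet : det !![s, w.re / s; 0, s⁻¹] = 1 := by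
    rw [det_fin_two_of]; field_simp; ring
  set u : SL(2, ℝ) := ⟨_, hdet⟩
  have hu : (u : Matrix (Fin 2) (Fin 2) ℝ) = !![s, w.re / s; 0, s⁻¹] := rfl
  have hsC : (s : ℂ) ≠ 0 := ofReal_ne_zero.2 hs
  refine ⟨u, (s : ℂ)⁻¹, inv_ne_zero hsC, ?_⟩
  simp only [smul_vec2, map_ofReal_apply, hu, of_apply, cons_val', cons_val_zero, cons_val_one,
    cons_val_fin_one, smul_cons, smul_eq_mul, smul_empty, vecCons_inj, mul_one, and_true]
  push_cast
  constructor
  · field_simp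
    linear_combination -hw'
  · ring

theorem mapsIntoHalfPlane_iff_exists_mul_mul (hj : j ^ 2 = -1) (g : SL(2, ℂ)) :
    MapsIntoHalfPlane j g ↔ ∃ (u : SL(2, ℝ)) (k p : SL(2, ℂ)),
      (k : Matrix (Fin 2) (Fin 2) ℂ) * (k : Matrix (Fin 2) (Fin 2) ℂ)ᵀ = 1 ∧
      p • ![j, 1] = ![j, 1] ∧ g = map ofRealHom u * k * p := by
  constructor
  · rintro ⟨c, hc, w, hw, hg⟩
    obtain ⟨u, c', hc', hu⟩ := exists_map_ofReal_smul_eq hj hw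
    have hw1 : (map ofRealHom u)⁻¹ • ![w, 1] = c'⁻¹ • ![j, 1] := by
      rw [inv_smul_eq_iff, smul_comm, hu, inv_smul_smul₀ hc']
    have hv : ((map ofRealHom u)⁻¹ * g) • ![j, 1] = (c / c') • ![j, 1] := by
      rw [mul_smul, hg, smul_comm, hw1, smul_smul, div_eq_mul_inv]
    obtain ⟨k, hk, hkv⟩ := exists_mul_transpose_eq_one_smul_eq hj (div_ne_zero hc hc')
    refine ⟨u, k, k⁻¹ * ((map ofRealHom u)⁻¹ * g), hk, ?_, by group⟩
    rw [mul_smul, hv, inv_smul_eq_iff, hkv]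
  · rintro ⟨u, k, p, hk, hp, rfl⟩
    obtain ⟨δ, hδ, hkv⟩ := exists_smul_eq_smul_of_mul_transpose_eq_one hj k hk
    obtain ⟨c, hc, w, hw, hu⟩ := mapsIntoHalfPlane_map_ofReal hj u
    refine ⟨δ * c, mul_ne_zero hδ hc, w, hw, ?_⟩
    rw [mul_smul, mul_smul, hp, hkv, smul_comm, hu, smul_smul]

theorem mem_halfPlane_iff_exists_mul_mul (hj : j ^ 2 = -1) (g : SL(2, ℂ)) :
    (g 1 0 * j + g 1 1 ≠ 0 ∧ 0 < ((g 0 0 * j + g 0 1) / (g 1 0 * j + g 1 1)).im * j.im) ↔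
      ∃ (u : SL(2, ℝ)) (k p : SL(2, ℂ)),
        (k : Matrix (Fin 2) (Fin 2) ℂ) * (k : Matrix (Fin 2) (Fin 2) ℂ)ᵀ = 1 ∧
        (∃ z : ℂ, (p : Matrix (Fin 2) (Fin 2) ℂ) = !![1 + z, -(j * z); -(j * z), 1 - z]) ∧
        g = map ofRealHom u * k * p := by
  simp only [← mapsIntoHalfPlane_iff, mapsIntoHalfPlane_iff_exists_mul_mul hj,
    exists_eq_parabolic_iff_smul_eq hj]

end Matrix.SpecialLinearGroup

/-- Structure of the preimages of the domains `Ξ⁺` and `Ξ⁻` in `SL(2,ℂ)`: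
`Ξ^± K_ℂ = G · K_ℂ · P^±`. -/
theorem XiPlusMinus_preimage_decomposition :
    ({g : Matrix.SpecialLinearGroup (Fin 2) ℂ |
        (g : Matrix (Fin 2) (Fin 2) ℂ) 1 0 * Complex.I +
            (g : Matrix (Fin 2) (Fin 2) ℂ) 1 1 ≠ 0 ∧
          0 < (((g : Matrix (Fin 2) (Fin 2) ℂ) 0 0 * Complex.I +
                  (g : Matrix (Fin 2) (Fin 2) ℂ) 0 1) /
                ((g : Matrix (Fin 2) (Fin 2) ℂ) 1 0 * Complex.I +
                  (g : Matrix (Fin 2) (Fin 2) ℂ) 1 1)).im} =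
      {g : Matrix.SpecialLinearGroup (Fin 2) ℂ |
        ∃ (u : Matrix.SpecialLinearGroup (Fin 2) ℝ)
          (k p : Matrix.SpecialLinearGroup (Fin 2) ℂ),
          (k : Matrix (Fin 2) (Fin 2) ℂ) * (k : Matrix (Fin 2) (Fin 2) ℂ)ᵀ = 1 ∧
          (∃ z : ℂ, (p : Matrix (Fin 2) (Fin 2) ℂ) =
            !![1 + z, -(Complex.I * z); -(Complex.I * z), 1 - z]) ∧
          g = Matrix.SpecialLinearGroup.map Complex.ofRealHom u * k * p}) ∧
    ({g : Matrix.SpecialLinearGroup (Fin 2) ℂ |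
        (g : Matrix (Fin 2) (Fin 2) ℂ) 1 0 * (-Complex.I) +
            (g : Matrix (Fin 2) (Fin 2) ℂ) 1 1 ≠ 0 ∧
          (((g : Matrix (Fin 2) (Fin 2) ℂ) 0 0 * (-Complex.I) +
                  (g : Matrix (Fin 2) (Fin 2) ℂ) 0 1) /
                ((g : Matrix (Fin 2) (Fin 2) ℂ) 1 0 * (-Complex.I) +
                  (g : Matrix (Fin 2) (Fin 2) ℂ) 1 1)).im < 0} =
      {g : Matrix.SpecialLinearGroup (Fin 2) ℂ |
        ∃ (u : Matrix.SpecialLinearGroup (Fin 2) ℝ)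
          (k p : Matrix.SpecialLinearGroup (Fin 2) ℂ),
          (k : Matrix (Fin 2) (Fin 2) ℂ) * (k : Matrix (Fin 2) (Fin 2) ℂ)ᵀ = 1 ∧
          (∃ z : ℂ, (p : Matrix (Fin 2) (Fin 2) ℂ) =
            !![1 + z, Complex.I * z; Complex.I * z, 1 - z]) ∧
          g = Matrix.SpecialLinearGroup.map Complex.ofRealHom u * k * p}) := by
  refine ⟨Set.ext fun g => ?_, Set.ext fun g => ?_⟩
  · simpa using Matrix.SpecialLinearGroup.mem_halfPlane_iff_exists_mul_mul Complex.I_sq g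
  · simpa using Matrix.SpecialLinearGroup.mem_halfPlane_iff_exists_mul_mul (j := -Complex.I)
      (by simp) g
end

section
/- Boundary decomposition of the crown in the hyperbolic model: let Q(z) = z₀² − z₁² − z₂² for z ∈ ℂ³, let X_ℂ = {z ∈ ℂ³ : Q(z) = 1}, and let Ξ = {z ∈ X_ℂ : Re z₀ > 0 and (Re z₀)² − (Re z₁)² − (Re z₂)² > 0}. Then the frontier of Ξ in X_ℂ, i.e. closure(Ξ) ∖ Ξ (closure taken in ℂ³; this agrees with the relative frontier since X_ℂ is closed and Ξ is relatively open), is the disjoint union of the semisimple part ∂_sΞ = {i·y : y ∈ ℝ³ with y₀² − y₁² − y₂² = −1} and the nilpotent part ∂_nΞ = {z ∈ X_ℂ : Re z₀ > 0 and (Re z₀)² − (Re z₁)² − (Re z₂)² = 0}. -/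
open Filter Topology Complex

lemma crown_mem_closure (a c yv : Fin 3 → ℝ)
    (hqa : a 0 ^ 2 - a 1 ^ 2 - a 2 ^ 2 = 0)
    (hqy : yv 0 ^ 2 - yv 1 ^ 2 - yv 2 ^ 2 = -1)
    (hbay : a 0 * yv 0 - a 1 * yv 1 - a 2 * yv 2 = 0)
    (hbcy : c 0 * yv 0 - c 1 * yv 1 - c 2 * yv 2 = 0)
    (hf : ∀ᶠ t in 𝓝[>] (0:ℝ), 0 < 2 * t * (a 0 * c 0 - a 1 * c 1 - a 2 * c 2)
            + t ^ 2 * (c 0 ^ 2 - c 1 ^ 2 - c 2 ^ 2))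
    (ha : ∀ᶠ t in 𝓝[>] (0:ℝ), 0 < a 0 + t * c 0) :
    (fun j => (a j : ℂ) + (yv j : ℂ) * Complex.I) ∈
      closure {z : Fin 3 → ℂ |
          (z 0 ^ 2 - z 1 ^ 2 - z 2 ^ 2 = 1) ∧ 0 < (z 0).re ∧
            0 < (z 0).re ^ 2 - (z 1).re ^ 2 - (z 2).re ^ 2} := by
  set β : ℝ := a 0 * c 0 - a 1 * c 1 - a 2 * c 2 with hβ
  set γ : ℝ := c 0 ^ 2 - c 1 ^ 2 - c 2 ^ 2 with hγ
  set g : ℝ → ℝ := fun t => 2 * t * β + t ^ 2 * γ with hg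
  set Φ : ℝ → (Fin 3 → ℂ) := fun t j =>
    ((a j + t * c j : ℝ) : ℂ) + ((Real.sqrt (1 - g t) * yv j : ℝ) : ℂ) * Complex.I with hΦ
  have hcont : Continuous Φ := by
    apply continuous_pi
    intro j
    fun_prop
  have hΦ0 : Φ 0 = (fun j => (a j : ℂ) + (yv j : ℂ) * Complex.I) := by
    funext j
    simp [hΦ, hg]
  have htend : Tendsto Φ (𝓝[>] (0:ℝ)) (𝓝 (fun j => (a j : ℂ) + (yv j : ℂ) * Complex.I)) := by
    rw [← hΦ0]
    exact (hcont.tendsto 0).mono_left nhdsWithin_le_nhds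
  have hsmall : ∀ᶠ t in 𝓝[>] (0:ℝ), g t < 1 := by
    have hgc : Continuous g := by fun_prop
    have : Tendsto g (𝓝 (0:ℝ)) (𝓝 (g 0)) := hgc.tendsto 0
    have h0 : g 0 = 0 := by simp [hg]
    rw [h0] at this
    exact (this.eventually (eventually_lt_nhds one_pos)).filter_mono nhdsWithin_le_nhds
  refine mem_closure_of_tendsto htend ?_
  filter_upwards [hf, ha, hsmall] with t hft hat hst
  have hr2 : Real.sqrt (1 - g t) ^ 2 = 1 - g t := Real.sq_sqrt (by linarith)
  set r : ℝ := Real.sqrt (1 - g t) with hr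
  constructor
  · -- Q(Φ t) = 1
    show (Φ t 0) ^ 2 - (Φ t 1) ^ 2 - (Φ t 2) ^ 2 = 1
    simp only [hΦ]
    rw [Complex.ext_iff]
    constructor
    · simp [pow_two, Complex.mul_re, Complex.mul_im, Complex.sub_re, Complex.add_re,
        Complex.add_im, Complex.sub_im]
      linear_combination hqa - r ^ 2 * hqy + hr2
    · simp [pow_two, Complex.mul_re, Complex.mul_im, Complex.sub_re, Complex.add_re,
        Complex.add_im, Complex.sub_im]
      linear_combination (2 * r) * hbay + (2 * r * t) * hbcy
  refine ⟨?_, ?_⟩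
  · show 0 < (Φ t 0).re
    simp [hΦ]
    exact hat
  · show 0 < (Φ t 0).re ^ 2 - (Φ t 1).re ^ 2 - (Φ t 2).re ^ 2
    have hre : ∀ j, (Φ t j).re = a j + t * c j := by
      intro j; simp [hΦ]
    rw [hre 0, hre 1, hre 2]
    have hid : (a 0 + t * c 0) ^ 2 - (a 1 + t * c 1) ^ 2 - (a 2 + t * c 2) ^ 2
        = (a 0 ^ 2 - a 1 ^ 2 - a 2 ^ 2) + (2 * t * β + t ^ 2 * γ) := by
      rw [hβ, hγ]; ring
    rw [hid, hqa]
    linarith [hft]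

/-- Boundary decomposition of the crown domain in the hyperbolic model: with
`Q(z) = z₀² - z₁² - z₂²`, `X_ℂ = {Q = 1}` and
`Ξ = {z ∈ X_ℂ : Re z₀ > 0, (Re z₀)² - (Re z₁)² - (Re z₂)² > 0}`, the frontier
`closure(Ξ) ∖ Ξ` is the disjoint union of the semisimple part
`∂_sΞ = {iy : y ∈ ℝ³, Q(y) = -1}` and the nilpotent part
`∂_nΞ = {z ∈ X_ℂ : Re z₀ > 0, (Re z₀)² - (Re z₁)² - (Re z₂)² = 0}`. -/
theorem crown_boundary_decomposition_hyperbolic_model :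
    (closure {z : Fin 3 → ℂ |
          (z 0 ^ 2 - z 1 ^ 2 - z 2 ^ 2 = 1) ∧ 0 < (z 0).re ∧
            0 < (z 0).re ^ 2 - (z 1).re ^ 2 - (z 2).re ^ 2} \
        {z : Fin 3 → ℂ |
          (z 0 ^ 2 - z 1 ^ 2 - z 2 ^ 2 = 1) ∧ 0 < (z 0).re ∧
            0 < (z 0).re ^ 2 - (z 1).re ^ 2 - (z 2).re ^ 2} =
      {z : Fin 3 → ℂ | ∃ y : Fin 3 → ℝ,
          y 0 ^ 2 - y 1 ^ 2 - y 2 ^ 2 = -1 ∧ ∀ j, z j = (y j : ℂ) * Complex.I} ∪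
        {z : Fin 3 → ℂ |
          (z 0 ^ 2 - z 1 ^ 2 - z 2 ^ 2 = 1) ∧ 0 < (z 0).re ∧
            (z 0).re ^ 2 - (z 1).re ^ 2 - (z 2).re ^ 2 = 0}) ∧
    Disjoint
      {z : Fin 3 → ℂ | ∃ y : Fin 3 → ℝ,
          y 0 ^ 2 - y 1 ^ 2 - y 2 ^ 2 = -1 ∧ ∀ j, z j = (y j : ℂ) * Complex.I}
      {z : Fin 3 → ℂ |
          (z 0 ^ 2 - z 1 ^ 2 - z 2 ^ 2 = 1) ∧ 0 < (z 0).re ∧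
            (z 0).re ^ 2 - (z 1).re ^ 2 - (z 2).re ^ 2 = 0} := by
  constructor
  · apply Set.Subset.antisymm
    · -- frontier ⊆ union
      rintro z ⟨hcl, hnot⟩
      have hC : z ∈ {z : Fin 3 → ℂ |
          (z 0 ^ 2 - z 1 ^ 2 - z 2 ^ 2 = 1) ∧ 0 ≤ (z 0).re ∧
            0 ≤ (z 0).re ^ 2 - (z 1).re ^ 2 - (z 2).re ^ 2} := by
        refine closure_minimal ?_ ?_ hcl
        · rintro w ⟨h1, h2, h3⟩
          exact ⟨h1, le_of_lt h2, le_of_lt h3⟩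
        · refine IsClosed.inter ?_ (IsClosed.inter ?_ ?_)
          · have : Continuous fun z : Fin 3 → ℂ => z 0 ^ 2 - z 1 ^ 2 - z 2 ^ 2 := by fun_prop
            exact isClosed_eq this continuous_const
          · have : Continuous fun z : Fin 3 → ℂ => (z 0).re := by fun_prop
            exact isClosed_le continuous_const this
          · have : Continuous fun z : Fin 3 → ℂ =>
                (z 0).re ^ 2 - (z 1).re ^ 2 - (z 2).re ^ 2 := by fun_prop
            exact isClosed_le continuous_const this
      obtain ⟨hQ, hge, hq⟩ := hC
      rcases eq_or_lt_of_le hge with heq | hpos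
      · -- Re z₀ = 0 : semisimple part
        left
        have hz0 : (z 0).re = 0 := heq.symm
        have hz1 : (z 1).re = 0 := by nlinarith [sq_nonneg (z 1).re, sq_nonneg (z 2).re]
        have hz2 : (z 2).re = 0 := by nlinarith [sq_nonneg (z 1).re, sq_nonneg (z 2).re]
        have hre := congrArg Complex.re hQ
        simp only [pow_two, Complex.mul_re, Complex.sub_re, Complex.one_re] at hre
        rw [hz0, hz1, hz2] at hre
        refine ⟨fun j => (z j).im, by nlinarith [hre], ?_⟩
        intro j
        fin_cases j <;> (apply Complex.ext <;> simp [hz0, hz1, hz2])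
      · rcases eq_or_lt_of_le hq with hq' | hq'
        · right
          exact ⟨hQ, hpos, hq'.symm⟩
        · exact absurd ⟨hQ, hpos, hq'⟩ hnot
    · -- union ⊆ frontier
      rintro z (⟨y, hqy, hzy⟩ | ⟨hQ, hx0, hq⟩)
      · constructor
        · have hz : z = fun j => ((0 : Fin 3 → ℝ) j : ℂ) + (y j : ℂ) * Complex.I := by
            funext j; simp [hzy j]
          rw [hz]
          apply crown_mem_closure 0 ![1 + y 0 ^ 2, y 0 * y 1, y 0 * y 2] y
          · norm_num
          · exact hqy
          · norm_num
          · simp only [Matrix.cons_val_zero, Matrix.cons_val_one, Matrix.head_cons,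
              Matrix.cons_val_two, Matrix.tail_cons]
            linear_combination y 0 * hqy
          · filter_upwards [self_mem_nhdsWithin] with t ht
            simp only [Set.mem_Ioi] at ht
            simp only [Pi.zero_apply, Matrix.cons_val_zero, Matrix.cons_val_one,
              Matrix.head_cons, Matrix.cons_val_two, Matrix.tail_cons, zero_mul, mul_zero,
              sub_zero, zero_add, zero_sub, neg_zero]
            have hE : (1 + y 0 ^ 2) ^ 2 - (y 0 * y 1) ^ 2 - (y 0 * y 2) ^ 2 = 1 + y 0 ^ 2 := by
              linear_combination y 0 ^ 2 * hqy
            nlinarith [hE, mul_pos (mul_pos ht ht) (show (0:ℝ) < 1 + y 0 ^ 2 by positivity)]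
          · filter_upwards [self_mem_nhdsWithin] with t ht
            simp only [Set.mem_Ioi] at ht
            simp only [Pi.zero_apply, Matrix.cons_val_zero, zero_add]
            nlinarith [sq_nonneg (y 0)]
        · rintro ⟨-, h2, -⟩
          rw [hzy 0] at h2
          simp at h2
      · constructor
        · have hre := congrArg Complex.re hQ
          have him := congrArg Complex.im hQ
          simp only [pow_two, Complex.mul_re, Complex.mul_im, Complex.sub_re, Complex.sub_im,
            Complex.one_re, Complex.one_im] at hre him
          have hqw : (z 0).im ^ 2 - (z 1).im ^ 2 - (z 2).im ^ 2 = -1 := by nlinarith [hre, hq]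
          have hbxw : (z 0).re * (z 0).im - (z 1).re * (z 1).im - (z 2).re * (z 2).im = 0 := by
            nlinarith [him]
          set lam : ℝ := (z 0).re * (z 0).im + (z 1).re * (z 1).im + (z 2).re * (z 2).im
            with hlam
          have hz : z = fun j => ((z j).re : ℂ) + ((z j).im : ℂ) * Complex.I := by
            funext j; apply Complex.ext <;> simp
          rw [hz]
          apply crown_mem_closure (fun j => (z j).re)
            ![(z 0).re + lam * (z 0).im, -(z 1).re + lam * (z 1).im, -(z 2).re + lam * (z 2).im]
            (fun j => (z j).im) hq hqw hbxw
          · simp only [Matrix.cons_val_zero, Matrix.cons_val_one, Matrix.head_cons,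
              Matrix.cons_val_two, Matrix.tail_cons]
            linear_combination lam * hqw - hlam
          · have hbxc : (z 0).re * ((z 0).re + lam * (z 0).im)
                - (z 1).re * (-(z 1).re + lam * (z 1).im)
                - (z 2).re * (-(z 2).re + lam * (z 2).im)
                = (z 0).re ^ 2 + (z 1).re ^ 2 + (z 2).re ^ 2 := by
              linear_combination lam * hbxw
            have hqc : ((z 0).re + lam * (z 0).im) ^ 2 - (-(z 1).re + lam * (z 1).im) ^ 2
                - (-(z 2).re + lam * (z 2).im) ^ 2 = lam ^ 2 := by
              linear_combination hq + lam ^ 2 * hqw - 2 * lam * hlam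
            filter_upwards [self_mem_nhdsWithin] with t ht
            simp only [Set.mem_Ioi] at ht
            simp only [Matrix.cons_val_zero, Matrix.cons_val_one, Matrix.head_cons,
              Matrix.cons_val_two, Matrix.tail_cons]
            rw [hbxc, hqc]
            nlinarith [sq_nonneg (t * lam), mul_pos ht (show (0:ℝ) <
              (z 0).re ^ 2 + (z 1).re ^ 2 + (z 2).re ^ 2 by positivity)]
          · have htd : Tendsto (fun t : ℝ => (z 0).re + t * ((z 0).re + lam * (z 0).im))
                (𝓝 0) (𝓝 ((z 0).re)) := by
              have hcont : Continuous (fun t : ℝ => (z 0).re + t * ((z 0).re + lam * (z 0).im)) :=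
                by fun_prop
              simpa using hcont.tendsto 0
            have hev : ∀ᶠ t in 𝓝[>] (0:ℝ),
                0 < (z 0).re + t * ((z 0).re + lam * (z 0).im) :=
              (htd.eventually (eventually_gt_nhds hx0)).filter_mono nhdsWithin_le_nhds
            simpa only [Matrix.cons_val_zero] using hev
        · rintro ⟨-, -, h3⟩
          rw [hq] at h3
          exact lt_irrefl 0 h3
  · rw [Set.disjoint_left]
    rintro z ⟨y, hqy, hzy⟩ ⟨-, h2, -⟩
    rw [hzy 0] at h2
    simp at h2
end
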